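/- arXiv:1508.01506 — 8 statements merged into one kernel-verified Lean document; each statement's English description precedes it below -/
import Mathlib

section
/- For every integer m ≥ 1 and every y ∈ [0,1], e^{-m y} - (1-y)^m ≤ (1/m)(1 - e^{-m y}). -/
open Real

lemma sq_le_exp_sub_one' {x : ℝ} (hx : 0 ≤ x) : x ^ 2 ≤ Real.exp x - 1 := by
  have h := Real.sum_le_exp_of_nonneg hx 4
  simp [Finset.sum_range_succ, Nat.factorial] at h
  nlinarith [sq_nonneg (x - 3/2), mul_nonneg (mul_nonneg hx hx) hx, sq_nonneg x]

/-- For every integer `m ≥ 1` and every `y ∈ [0,1]`,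
`exp (-(m*y)) - (1-y)^m ≤ (1/m) * (1 - exp (-(m*y)))`. -/
theorem exp_sub_pow_le (m : ℕ) (hm : 1 ≤ m) (y : ℝ) (hy0 : 0 ≤ y) (hy1 : y ≤ 1) :
    Real.exp (-(m * y)) - (1 - y) ^ m ≤ (1 / m) * (1 - Real.exp (-(m * y))) := by
  have hm1 : (1 : ℝ) ≤ m := by exact_mod_cast hm
  have hmpos : (0 : ℝ) < m := by linarith
  have hE : (0 : ℝ) < Real.exp (-(m * y)) := Real.exp_pos _
  -- Step 1 : exp(-y) * (1 - y^2) ≤ 1 - y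
  have h1 : Real.exp (-y) * (1 - y ^ 2) ≤ 1 - y := by
    have h := Real.add_one_le_exp y
    have h2 : (1 + y) * (1 - y) ≤ Real.exp y * (1 - y) :=
      mul_le_mul_of_nonneg_right (by linarith) (by linarith)
    have h3 := mul_le_mul_of_nonneg_left h2 (Real.exp_pos (-y)).le
    calc Real.exp (-y) * (1 - y ^ 2) = Real.exp (-y) * ((1 + y) * (1 - y)) := by ring
      _ ≤ Real.exp (-y) * (Real.exp y * (1 - y)) := h3
      _ = 1 - y := by rw [← mul_assoc, ← Real.exp_add]; simp
  -- nonnegativity of LHS of h1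
  have hy2 : y ^ 2 ≤ 1 := by nlinarith
  have hnn : 0 ≤ Real.exp (-y) * (1 - y ^ 2) :=
    mul_nonneg (Real.exp_pos _).le (by linarith)
  -- Step 2 : raise to the m
  have h4 : (Real.exp (-y) * (1 - y ^ 2)) ^ m ≤ (1 - y) ^ m :=
    pow_le_pow_left₀ hnn h1 m
  have h5 : (Real.exp (-y)) ^ m = Real.exp (-(m * y)) := by
    rw [← Real.exp_nat_mul]; ring_nf
  -- Step 3 : Bernoulli
  have h6 : 1 - (m : ℝ) * y ^ 2 ≤ (1 - y ^ 2) ^ m := by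
    have := one_add_mul_le_pow (a := -y ^ 2) (by linarith) m
    calc 1 - (m : ℝ) * y ^ 2 = 1 + (m : ℝ) * (-y ^ 2) := by ring
      _ ≤ (1 + -y ^ 2) ^ m := this
      _ = (1 - y ^ 2) ^ m := by ring_nf
  -- combine : exp(-(m y)) * (1 - m y^2) ≤ (1-y)^m
  have h7 : Real.exp (-(m * y)) * (1 - (m : ℝ) * y ^ 2) ≤ (1 - y) ^ m := by
    calc Real.exp (-(m * y)) * (1 - (m : ℝ) * y ^ 2)
        ≤ Real.exp (-(m * y)) * (1 - y ^ 2) ^ m :=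
          mul_le_mul_of_nonneg_left h6 hE.le
      _ = (Real.exp (-y) * (1 - y ^ 2)) ^ m := by rw [mul_pow, h5]
      _ ≤ (1 - y) ^ m := h4
  -- Step 4 : x^2 ≤ exp x - 1 with x = m y
  have hx0 : 0 ≤ (m : ℝ) * y := mul_nonneg hmpos.le hy0
  have h8 : ((m : ℝ) * y) ^ 2 ≤ Real.exp ((m : ℝ) * y) - 1 := sq_le_exp_sub_one' hx0
  -- multiply by exp(-(m y))
  have hEE : Real.exp (-(m * y)) * Real.exp ((m : ℝ) * y) = 1 := by
    rw [← Real.exp_add]; simp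
  have h9 : (m : ℝ) ^ 2 * y ^ 2 * Real.exp (-(m * y)) ≤ 1 - Real.exp (-(m * y)) := by
    have := mul_le_mul_of_nonneg_left h8 hE.le
    calc (m : ℝ) ^ 2 * y ^ 2 * Real.exp (-(m * y))
        = Real.exp (-(m * y)) * ((m : ℝ) * y) ^ 2 := by ring
      _ ≤ Real.exp (-(m * y)) * (Real.exp ((m : ℝ) * y) - 1) := this
      _ = 1 - Real.exp (-(m * y)) := by rw [mul_sub, hEE]; ring
  -- finish
  have h10 : Real.exp (-(m * y)) - (1 - y) ^ m ≤ (m : ℝ) * y ^ 2 * Real.exp (-(m * y)) := by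
    nlinarith [h7]
  have h11 : (m : ℝ) * y ^ 2 * Real.exp (-(m * y)) ≤ (1 / m) * (1 - Real.exp (-(m * y))) := by
    rw [div_mul_eq_mul_div, le_div_iff₀ hmpos]
    nlinarith [h9]
  linarith
end

section
/- Let (p_k) be a probability vector with p_k ∈ (0,1], and let V(t) = ∑_{k≥1}(1 - e^{-p_k t}). Then for every integer m ≥ 1, ∑_{k≥1} (e^{-p_k m} - (1-p_k)^m) ≤ V(m)/m. -/
open Real


lemma l1 (x : ℝ) (hx0 : 0 ≤ x) (hx1 : x ≤ 1) :
    Real.exp x * (Real.exp (-x) - (1 - x)) ≤ x ^ 2 := by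
  have h : x/2 + 1 ≤ Real.exp (x/2) := Real.add_one_le_exp _
  have hE2 : (1 + x/2)^2 ≤ Real.exp x := by
    have hsq : Real.exp (x/2) * Real.exp (x/2) = Real.exp x := by
      rw [← Real.exp_add]; ring_nf
    nlinarith [Real.exp_pos (x/2)]
  have he : Real.exp x * Real.exp (-x) = 1 := by
    rw [← Real.exp_add]; simp
  have h2 : (1 - x) * (1 + x/2)^2 ≤ (1 - x) * Real.exp x :=
    mul_le_mul_of_nonneg_left hE2 (by linarith)
  nlinarith [Real.exp_pos x]

lemma l2 (u : ℝ) (hu : 0 ≤ u) : u ^ 2 ≤ Real.exp u - 1 := by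
  have h : u/5 + 1 ≤ Real.exp (u/5) := Real.add_one_le_exp _
  have h5 : Real.exp (u/5) ^ 5 = Real.exp u := by
    rw [← Real.exp_nat_mul]; ring_nf
  have hp : (1 + u/5)^5 ≤ Real.exp (u/5)^5 :=
    pow_le_pow_left₀ (by linarith) (by linarith) 5
  have hpoly : u^2 ≤ (1 + u/5)^5 - 1 := by
    nlinarith [mul_nonneg hu (sq_nonneg (u - 13/5)), mul_nonneg (mul_nonneg hu hu) (sq_nonneg (u - 13/5)), sq_nonneg (u - 13/5), mul_nonneg (mul_nonneg hu hu) hu]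
  linarith [hp.trans_eq h5]

lemma powdiff (a b : ℝ) (hb : 0 ≤ b) (hba : b ≤ a) :
    ∀ n : ℕ, a ^ (n+1) - b ^ (n+1) ≤ ((n:ℝ)+1) * a ^ n * (a - b) := by
  intro n
  induction n with
  | zero => simp
  | succ n ih =>
    have ha : 0 ≤ a := hb.trans hba
    have hbn : b ^ (n+1) ≤ a ^ (n+1) := pow_le_pow_left₀ hb hba _
    have h2 : a * (a ^ (n+1) - b ^ (n+1)) ≤ a * (((n:ℝ)+1) * a ^ n * (a - b)) :=
      mul_le_mul_of_nonneg_left ih ha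
    have h3 : b ^ (n+1) * (a - b) ≤ a ^ (n+1) * (a - b) :=
      mul_le_mul_of_nonneg_right hbn (by linarith)
    push_cast
    calc a ^ (n+1+1) - b ^ (n+1+1)
        = a * (a ^ (n+1) - b ^ (n+1)) + b ^ (n+1) * (a - b) := by ring
      _ ≤ a * (((n:ℝ)+1) * a ^ n * (a - b)) + a ^ (n+1) * (a - b) := add_le_add h2 h3
      _ = ((n:ℝ)+1+1) * a ^ (n+1) * (a - b) := by ring

lemma key (x : ℝ) (hx0 : 0 < x) (hx1 : x ≤ 1) (m : ℕ) (hm : 1 ≤ m) :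
    (m:ℝ) * (Real.exp (-(x * m)) - (1 - x) ^ m) ≤ 1 - Real.exp (-(x * m)) := by
  obtain ⟨n, rfl⟩ : ∃ n, m = n + 1 := ⟨m - 1, (Nat.succ_pred_eq_of_pos hm).symm⟩
  set a := Real.exp (-x) with hadef
  have ha0 : 0 < a := Real.exp_pos _
  have hb0 : (0:ℝ) ≤ 1 - x := by linarith
  have hba : 1 - x ≤ a := by
    have := Real.add_one_le_exp (-x); linarith
  have ham : Real.exp (-(x * (n+1:ℕ))) = a ^ (n+1) := by
    rw [hadef, ← Real.exp_nat_mul]; ring_nf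
  have hl1 : Real.exp x * (a - (1 - x)) ≤ x ^ 2 := l1 x hx0.le hx1
  have hxe : Real.exp x * a = 1 := by rw [hadef, ← Real.exp_add]; simp
  have hab : a - (1 - x) ≤ x ^ 2 * a := by
    have hepos : (0:ℝ) < Real.exp x := Real.exp_pos x
    rw [← mul_le_mul_iff_right₀ hepos]
    calc Real.exp x * (a - (1 - x)) ≤ x ^ 2 := hl1
      _ = x ^ 2 * (Real.exp x * a) := by rw [hxe]; ring
      _ = Real.exp x * (x ^ 2 * a) := by ring
  have hA : a ^ (n+1) - (1 - x) ^ (n+1) ≤ ((n:ℝ)+1) * a ^ n * (a - (1 - x)) :=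
    powdiff a (1 - x) hb0 hba n
  have hu : (0:ℝ) ≤ ((n:ℝ)+1) * x := by positivity
  have hl2 : (((n:ℝ)+1) * x) ^ 2 ≤ Real.exp (((n:ℝ)+1) * x) - 1 := l2 _ hu
  have hexe : Real.exp (((n:ℝ)+1) * x) * a ^ (n+1) = 1 := by
    rw [← ham, ← Real.exp_add]; push_cast; ring_nf; exact Real.exp_zero
  have han : (0:ℝ) < a ^ n := pow_pos ha0 n
  have hstep : (((n:ℝ)+1) * x) ^ 2 * a ^ (n+1) ≤ 1 - a ^ (n+1) := by
    have h1 : (((n:ℝ)+1) * x) ^ 2 * a ^ (n+1) ≤ (Real.exp (((n:ℝ)+1) * x) - 1) * a ^ (n+1) :=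
      mul_le_mul_of_nonneg_right hl2 (by positivity)
    have h2 : (Real.exp (((n:ℝ)+1) * x) - 1) * a ^ (n+1) = 1 - a ^ (n+1) := by
      rw [sub_mul, hexe]; ring
    linarith
  rw [ham]
  push_cast
  have hfin : ((n:ℝ)+1) * (((n:ℝ)+1) * a ^ n * (a - (1 - x)))
      ≤ (((n:ℝ)+1) * x) ^ 2 * a ^ (n+1) := by
    have h4 : ((n:ℝ)+1) * a ^ n * (a - (1 - x)) ≤ ((n:ℝ)+1) * a ^ n * (x ^ 2 * a) :=
      mul_le_mul_of_nonneg_left hab (by positivity)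
    have h5 : ((n:ℝ)+1) * (((n:ℝ)+1) * a ^ n * (x ^ 2 * a)) = (((n:ℝ)+1) * x) ^ 2 * a ^ (n+1) := by
      ring
    nlinarith [h4]
  have hmono : ((n:ℝ)+1) * (a ^ (n+1) - (1 - x) ^ (n+1))
      ≤ ((n:ℝ)+1) * (((n:ℝ)+1) * a ^ n * (a - (1 - x))) :=
    mul_le_mul_of_nonneg_left hA (by positivity)
  linarith


/-- For a probability vector `(p k)` with `p k ∈ (0,1]` and `V t = ∑ₖ (1 - e^{-pₖ t})`:
for every integer `m ≥ 1`, `∑ₖ (e^{-pₖ m} - (1-pₖ)^m) ≤ V m / m`. -/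
theorem dePoissonization_bound
    (p : ℕ → ℝ) (hp0 : ∀ k, 0 < p k) (hp1 : ∀ k, p k ≤ 1) (hsum : ∑' k, p k = 1)
    (V : ℝ → ℝ) (hV : ∀ t, V t = ∑' k, (1 - Real.exp (-(p k * t))))
    (m : ℕ) (hm : 1 ≤ m) :
    (∑' k, (Real.exp (-(p k * m)) - (1 - p k) ^ m)) ≤ V m / m := by
  have hmR : (0:ℝ) < m := by exact_mod_cast Nat.pos_of_ne_zero (by omega)
  have hp_sum : Summable p := by
    by_contra h
    rw [tsum_eq_zero_of_not_summable h] at hsum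
    norm_num at hsum
  set f : ℕ → ℝ := fun k => Real.exp (-(p k * m)) - (1 - p k) ^ m with hf
  set g : ℕ → ℝ := fun k => 1 - Real.exp (-(p k * m)) with hg
  have hg0 : ∀ k, 0 ≤ g k := by
    intro k
    have h1 : Real.exp (-(p k * m)) ≤ 1 := by
      rw [Real.exp_le_one_iff]
      have h2 := (hp0 k).le
      nlinarith [hmR.le]
    simp only [hg]
    linarith
  have hgle : ∀ k, g k ≤ (m:ℝ) * p k := by
    intro k
    have := Real.add_one_le_exp (-(p k * m))
    simp only [hg]
    nlinarith
  have hgsum : Summable g := Summable.of_nonneg_of_le hg0 hgle (hp_sum.mul_left ((m:ℝ)))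
  have hkey : ∀ k, (m:ℝ) * f k ≤ g k := fun k => key (p k) (hp0 k) (hp1 k) m hm
  have hf0 : ∀ k, 0 ≤ f k := by
    intro k
    have h1 : 1 - p k ≤ Real.exp (-(p k)) := by
      have := Real.add_one_le_exp (-(p k)); linarith
    have h2 : (1 - p k) ^ m ≤ Real.exp (-(p k)) ^ m :=
      pow_le_pow_left₀ (by linarith [hp1 k]) h1 m
    have h3 : Real.exp (-(p k)) ^ m = Real.exp (-(p k * m)) := by
      rw [← Real.exp_nat_mul]; ring_nf
    simp only [hf]
    rw [← h3]; linarith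
  have hfle : ∀ k, f k ≤ g k := by
    intro k
    have hk := hkey k
    have h1 : (1:ℝ) ≤ (m:ℝ) := by exact_mod_cast hm
    nlinarith [hf0 k]
  have hfsum : Summable f := Summable.of_nonneg_of_le hf0 hfle hgsum
  have hdiv : ∀ k, f k ≤ g k / m := by
    intro k
    rw [le_div_iff₀ hmR]
    calc f k * m = (m:ℝ) * f k := by ring
      _ ≤ g k := hkey k
  have hmain : (∑' k, f k) ≤ (∑' k, g k) / m := by
    calc (∑' k, f k) ≤ ∑' k, g k / m :=
          Summable.tsum_le_tsum hdiv hfsum (hgsum.div_const _)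
      _ = (∑' k, g k) / m := tsum_div_const
  rw [hV]
  exact hmain
end

section
/- Let N_k, k ≥ 1, be independent Poisson processes with intensities p_k > 0, ∑_k p_k = 1, let \tilde p_k(t) = 1 - e^{-p_k t}, and let ε ∈ {-1,1}^ℕ be fixed. Define \tilde Z_1^ε(t) = ∑_{k≥1} ε_k (1_{N_k(t) ≠ 0} - \tilde p_k(t)). Then for all 0 ≤ s ≤ t, Cov(\tilde Z_1^ε(s), \tilde Z_1^ε(t)) = V(s+t) - V(t), where V(u) = ∑_{k≥1}(1 - e^{-p_k u}). -/
open Real MeasureTheory ProbabilityTheory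

/-- Let `N k` be independent Poisson processes with intensities `p k > 0`, `∑ₖ p k = 1`,
let `p̃ₖ t = 1 - e^{-pₖ t}`, and let `ε ∈ {-1,1}^ℕ` be fixed. With
`Z̃₁ᵉ t = ∑ₖ εₖ (𝟙{N k t ≠ 0} - p̃ₖ t)` (a centered process), for all `0 ≤ s ≤ t`,
`Cov(Z̃₁ᵉ s, Z̃₁ᵉ t) = E[Z̃₁ᵉ s ⬝ Z̃₁ᵉ t] = V (s+t) - V t`, where `V u = ∑ₖ (1 - e^{-pₖ u})`. -/
theorem poissonized_occupancy_covariance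
    {Ω : Type*} [MeasureSpace Ω] [IsProbabilityMeasure (ℙ : Measure Ω)]
    (p : ℕ → ℝ) (hp0 : ∀ k, 0 < p k) (hsum : ∑' k, p k = 1)
    (N : ℕ → ℝ → Ω → ℕ)
    (hmeas : ∀ k t, Measurable (N k t))
    (hzero : ∀ k ω, N k 0 ω = 0)
    (hmono : ∀ k ω, Monotone (fun t => N k t ω))
    -- stationary Poisson increments
    (hinc : ∀ k, ∀ s t : ℝ, 0 ≤ s → s ≤ t → ∀ j : ℕ,
      ℙ {ω | N k t ω - N k s ω = j}
        = ENNReal.ofReal (Real.exp (-(p k * (t - s))) * (p k * (t - s)) ^ j / j.factorial))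
    -- independent increments
    (hindepinc : ∀ k, ∀ s t : ℝ, 0 ≤ s → s ≤ t →
      IndepFun (fun ω => N k s ω) (fun ω => N k t ω - N k s ω) ℙ)
    -- independence of the processes over k
    (hindep : iIndepFun (fun k => fun ω => (fun t => N k t ω)) ℙ)
    (ε : ℕ → ℝ) (hε : ∀ k, ε k = 1 ∨ ε k = -1)
    (Z1 : ℝ → Ω → ℝ)
    (hZ1 : ∀ t ω, Z1 t ω
      = ∑' k, ε k * ((if N k t ω ≠ 0 then (1 : ℝ) else 0) - (1 - Real.exp (-(p k * t)))))
    (V : ℝ → ℝ) (hV : ∀ u, V u = ∑' k, (1 - Real.exp (-(p k * u)))) :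
    ∀ s t : ℝ, 0 ≤ s → s ≤ t →
      ∫ ω, Z1 s ω * Z1 t ω ∂ℙ = V (s + t) - V t := by
  intro s t hs hst
  classical
  have ht : 0 ≤ t := hs.trans hst
  have hst2 : 0 ≤ s + t := by linarith
  have hpsum : Summable p := by
    by_contra h
    rw [tsum_eq_zero_of_not_summable h] at hsum
    norm_num at hsum
  have hεabs : ∀ k, |ε k| = 1 := fun k => by rcases hε k with h | h <;> simp [h]
  have hexp1 : ∀ k (u : ℝ), 0 ≤ u → Real.exp (-(p k * u)) ≤ 1 := by
    intro k u hu
    rw [Real.exp_le_one_iff]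
    nlinarith [(hp0 k).le]
  have hq0 : ∀ k (u : ℝ), 0 ≤ u → 0 ≤ 1 - Real.exp (-(p k * u)) := by
    intro k u hu; linarith [hexp1 k u hu]
  have hq1 : ∀ k (u : ℝ), 1 - Real.exp (-(p k * u)) ≤ 1 := by
    intro k u; linarith [Real.exp_pos (-(p k * u))]
  have hqle : ∀ k (u : ℝ), 1 - Real.exp (-(p k * u)) ≤ p k * u := by
    intro k u; nlinarith [Real.add_one_le_exp (-(p k * u))]
  have hqsum : ∀ (u : ℝ), 0 ≤ u → Summable (fun k => 1 - Real.exp (-(p k * u))) := by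
    intro u hu
    exact Summable.of_nonneg_of_le (fun k => hq0 k u hu) (fun k => hqle k u)
      (hpsum.mul_right u)
  -- measurability of the basic sets
  have hAmeas : ∀ k (u : ℝ), MeasurableSet {ω | N k u ω ≠ 0} := by
    intro k u
    have : {ω | N k u ω ≠ 0} = (N k u ⁻¹' {0})ᶜ := by ext ω; simp
    rw [this]; exact (hmeas k u (measurableSet_singleton 0)).compl
  -- probability computations
  have hP0 : ∀ k (u : ℝ), 0 ≤ u →
      ℙ {ω | N k u ω = 0} = ENNReal.ofReal (Real.exp (-(p k * u))) := by
    intro k u hu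
    have h := hinc k 0 u le_rfl hu 0
    simpa [hzero] using h
  have hPA : ∀ k (u : ℝ), 0 ≤ u →
      ℙ {ω | N k u ω ≠ 0} = ENNReal.ofReal (1 - Real.exp (-(p k * u))) := by
    intro k u hu
    have hc : {ω | N k u ω ≠ 0} = {ω | N k u ω = 0}ᶜ := by ext ω; simp
    have hms : MeasurableSet {ω | N k u ω = 0} := by
      have h2 : {ω | N k u ω = 0} = N k u ⁻¹' {0} := rfl
      rw [h2]; exact hmeas k u (measurableSet_singleton 0)
    rw [hc, measure_compl hms (measure_ne_top _ _), hP0 k u hu, measure_univ,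
      ENNReal.ofReal_sub _ (Real.exp_nonneg _), ENNReal.ofReal_one]
  -- indicator integrals
  have hind_eq : ∀ k (u : ℝ), (fun ω => if N k u ω ≠ 0 then (1:ℝ) else 0)
      = {ω | N k u ω ≠ 0}.indicator (fun _ => (1:ℝ)) := by
    intro k u; funext ω; simp [Set.indicator_apply, Set.mem_setOf_eq]
  have hind_int : ∀ k (u : ℝ), Integrable (fun ω => if N k u ω ≠ 0 then (1:ℝ) else 0) ℙ := by
    intro k u
    rw [hind_eq k u]
    exact (integrable_const (1:ℝ)).indicator (hAmeas k u)
  have hint_ind : ∀ k (u : ℝ), 0 ≤ u →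
      ∫ ω, (if N k u ω ≠ 0 then (1:ℝ) else 0) ∂ℙ = 1 - Real.exp (-(p k * u)) := by
    intro k u hu
    rw [show (fun ω => if N k u ω ≠ 0 then (1:ℝ) else 0)
        = {ω | N k u ω ≠ 0}.indicator (fun _ => (1:ℝ)) from hind_eq k u]
    rw [integral_indicator_const (1:ℝ) (hAmeas k u), measureReal_def, hPA k u hu,
      ENNReal.toReal_ofReal (hq0 k u hu), smul_eq_mul, mul_one]
  -- the centered summands
  set F : ℝ → ℕ → Ω → ℝ :=
    fun u k ω => ε k * ((if N k u ω ≠ 0 then (1:ℝ) else 0) - (1 - Real.exp (-(p k * u)))) with hF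
  have hFmeas : ∀ (u : ℝ) k, Measurable (F u k) := by
    intro u k
    exact ((Measurable.ite (hAmeas k u) measurable_const measurable_const).sub
      measurable_const).const_mul (ε k)
  have hFint : ∀ (u : ℝ) k, Integrable (F u k) ℙ := by
    intro u k
    exact ((hind_int k u).sub (integrable_const _)).const_mul _
  have hFzero : ∀ (u : ℝ), 0 ≤ u → ∀ k, ∫ ω, F u k ω ∂ℙ = 0 := by
    intro u hu k
    show (∫ ω, ε k * ((if N k u ω ≠ 0 then (1:ℝ) else 0) - (1 - Real.exp (-(p k * u)))) ∂ℙ) = 0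
    rw [integral_const_mul, integral_sub (hind_int k u) (integrable_const _),
      hint_ind k u hu, integral_const]
    simp
  have hFbd : ∀ (u : ℝ), 0 ≤ u → ∀ k ω, ‖F u k ω‖ ≤ 1 := by
    intro u hu k ω
    rw [Real.norm_eq_abs, abs_mul, hεabs k, one_mul]
    have h0 := hq0 k u hu
    have h1 := hq1 k u
    by_cases hN : N k u ω ≠ 0
    · rw [if_pos hN, abs_of_nonneg (by linarith)]; linarith
    · rw [if_neg hN, abs_of_nonpos (by linarith)]; linarith
  -- independence of distinct summands
  have hproc_indep : ∀ {k j : ℕ}, k ≠ j → ∀ (u v : ℝ), IndepFun (F u k) (F v j) ℙ := by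
    intro k j hkj u v
    have h := hindep.indepFun hkj
    have hφ : Measurable (fun w : ℝ → ℕ =>
        ε k * ((if w u ≠ 0 then (1:ℝ) else 0) - (1 - Real.exp (-(p k * u))))) :=
      Measurable.comp (f := fun w : ℝ → ℕ => w u)
        (g := fun n : ℕ => ε k * ((if n ≠ 0 then (1:ℝ) else 0) - (1 - Real.exp (-(p k * u)))))
        measurable_from_top (measurable_pi_apply u)
    have hψ : Measurable (fun w : ℝ → ℕ =>
        ε j * ((if w v ≠ 0 then (1:ℝ) else 0) - (1 - Real.exp (-(p j * v))))) :=
      Measurable.comp (f := fun w : ℝ → ℕ => w v)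
        (g := fun n : ℕ => ε j * ((if n ≠ 0 then (1:ℝ) else 0) - (1 - Real.exp (-(p j * v)))))
        measurable_from_top (measurable_pi_apply v)
    exact h.comp hφ hψ
  have hcross : ∀ {k j : ℕ}, k ≠ j → ∫ ω, F s k ω * F t j ω ∂ℙ = 0 := by
    intro k j hkj
    have h := (hproc_indep hkj s t).integral_mul_eq_mul_integral (hFmeas s k).aestronglyMeasurable
      (hFmeas t j).aestronglyMeasurable
    rw [show (fun ω => F s k ω * F t j ω) = F s k * F t j from rfl, h, hFzero s hs k, zero_mul]
  have hcross_abs : ∀ {k j : ℕ}, k ≠ j →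
      ∫ ω, |F s k ω * F t j ω| ∂ℙ = (∫ ω, |F s k ω| ∂ℙ) * ∫ ω, |F t j ω| ∂ℙ := by
    intro k j hkj
    have hi : IndepFun (fun ω => |F s k ω|) (fun ω => |F t j ω|) ℙ :=
      (hproc_indep hkj s t).comp measurable_abs measurable_abs
    have h := hi.integral_mul_eq_mul_integral ((hFmeas s k).abs).aestronglyMeasurable
      ((hFmeas t j).abs).aestronglyMeasurable
    calc ∫ ω, |F s k ω * F t j ω| ∂ℙ = ∫ ω, |F s k ω| * |F t j ω| ∂ℙ := by
          simp only [abs_mul]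
      _ = (∫ ω, |F s k ω| ∂ℙ) * ∫ ω, |F t j ω| ∂ℙ := h
  have habs_le : ∀ (u : ℝ), 0 ≤ u → ∀ k,
      ∫ ω, |F u k ω| ∂ℙ ≤ 2 * (p k * u) := by
    intro u hu k
    have hb : ∀ ω, |F u k ω| ≤ (if N k u ω ≠ 0 then (1:ℝ) else 0)
        + (1 - Real.exp (-(p k * u))) := by
      intro ω
      rw [show F u k ω = ε k * ((if N k u ω ≠ 0 then (1:ℝ) else 0)
        - (1 - Real.exp (-(p k * u)))) from rfl, abs_mul, hεabs k, one_mul]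
      have h0 := hq0 k u hu
      have h1 := hq1 k u
      by_cases hN : N k u ω ≠ 0
      · rw [if_pos hN, abs_of_nonneg (by linarith)]; linarith
      · rw [if_neg hN, abs_of_nonpos (by linarith)]; linarith
    have h2 : ∫ ω, |F u k ω| ∂ℙ ≤ ∫ ω, ((if N k u ω ≠ 0 then (1:ℝ) else 0)
        + (1 - Real.exp (-(p k * u)))) ∂ℙ :=
      integral_mono (hFint u k).abs ((hind_int k u).add (integrable_const _)) hb
    rw [integral_add (hind_int k u) (integrable_const _), hint_ind k u hu,
      integral_const] at h2
    have h3 := hqle k u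
    have := measure_univ (μ := (ℙ : Measure Ω))
    simp only [this, probReal_univ, ENNReal.toReal_one, smul_eq_mul, one_mul] at h2
    linarith
  have habs_nonneg : ∀ (u : ℝ) (k : ℕ), 0 ≤ ∫ ω, |F u k ω| ∂ℙ := by
    intro u k
    exact integral_nonneg fun ω => abs_nonneg _
  -- integrability of products
  have hFGint : ∀ k j, Integrable (fun ω => F s k ω * F t j ω) ℙ := by
    intro k j
    exact Integrable.bdd_mul (hFint t j) (hFmeas s k).aestronglyMeasurable
      (ae_of_all _ fun ω => hFbd s hs k ω)
  -- Borel-Cantelli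
  have hBC : ∀ᵐ ω ∂ℙ, {k | N k t ω ≠ 0}.Finite := by
    apply MeasureTheory.ae_finite_setOf_mem (s := fun k => {ω | N k t ω ≠ 0})
    have heq : ∀ k, ℙ {ω | N k t ω ≠ 0} = ENNReal.ofReal (1 - Real.exp (-(p k * t))) :=
      fun k => hPA k t ht
    rw [tsum_congr heq, ← ENNReal.ofReal_tsum_of_nonneg (fun k => hq0 k t ht) (hqsum t ht)]
    exact ENNReal.ofReal_ne_top
  -- a.e. summability
  have hsummF : ∀ᵐ ω ∂ℙ, (Summable fun k => ‖F s k ω‖) ∧ (Summable fun k => ‖F t k ω‖) := by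
    filter_upwards [hBC] with ω hω
    have hcof : ∀ᶠ k in Filter.cofinite, N k t ω = 0 := Filter.eventually_cofinite.mpr hω
    have key : ∀ (u : ℝ), 0 ≤ u → (∀ k, N k u ω ≤ N k t ω) →
        Summable fun k => ‖F u k ω‖ := by
      intro u hu hle
      apply Summable.of_norm_bounded_eventually (g := fun k => 1 - Real.exp (-(p k * u)))
        (hqsum u hu)
      filter_upwards [hcof] with k hk
      have hNu : N k u ω = 0 := Nat.le_zero.mp (hk ▸ hle k)
      rw [norm_norm, show F u k ω = ε k * ((if N k u ω ≠ 0 then (1:ℝ) else 0)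
        - (1 - Real.exp (-(p k * u)))) from rfl, hNu]
      simp only [ne_eq, not_true_eq_false, if_false, zero_sub, Real.norm_eq_abs,
        abs_mul, hεabs k, one_mul, abs_neg]
      rw [abs_of_nonneg (hq0 k u hu)]
    exact ⟨key s hs fun k => hmono k ω hst, key t ht fun k => le_rfl⟩
  -- a.e. product expansion
  have hprod : ∀ᵐ ω ∂ℙ, Z1 s ω * Z1 t ω = ∑' (z : ℕ × ℕ), F s z.1 ω * F t z.2 ω := by
    filter_upwards [hsummF] with ω hω
    rw [hZ1 s ω, hZ1 t ω]
    exact tsum_mul_tsum_of_summable_norm hω.1 hω.2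
  -- finiteness for integral_tsum
  have hlint_eq : ∀ k j, ∫⁻ ω, ‖F s k ω * F t j ω‖₊ ∂ℙ
      = ENNReal.ofReal (∫ ω, |F s k ω * F t j ω| ∂ℙ) := by
    intro k j
    simp only [← enorm_eq_nnnorm]
    rw [← ofReal_integral_norm_eq_lintegral_enorm (hFGint k j)]
    simp [Real.norm_eq_abs, abs_mul]
  have hfin : (∑' (z : ℕ × ℕ), ∫⁻ ω, ‖F s z.1 ω * F t z.2 ω‖₊ ∂ℙ) ≠ ⊤ := by
    have hbound : ∀ z : ℕ × ℕ, ∫⁻ ω, ‖F s z.1 ω * F t z.2 ω‖₊ ∂ℙ ≤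
        ENNReal.ofReal (∫ ω, |F s z.1 ω| ∂ℙ) * ENNReal.ofReal (∫ ω, |F t z.2 ω| ∂ℙ)
          + (if z.1 = z.2 then ENNReal.ofReal (∫ ω, |F s z.1 ω| ∂ℙ) else 0) := by
      rintro ⟨k, j⟩
      rw [hlint_eq k j]
      by_cases hkj : k = j
      · subst hkj
        simp only [if_pos rfl]
        refine le_trans ?_ le_add_self
        apply ENNReal.ofReal_le_ofReal
        apply integral_mono (hFGint k k).abs (hFint s k).abs
        intro ω
        dsimp only
        rw [abs_mul]
        calc |F s k ω| * |F t k ω| ≤ |F s k ω| * 1 := by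
              have h1 : |F t k ω| ≤ 1 := by
                have := hFbd t ht k ω
                rwa [Real.norm_eq_abs] at this
              nlinarith [abs_nonneg (F s k ω), abs_nonneg (F t k ω)]
          _ = |F s k ω| := mul_one _
      · rw [if_neg hkj, add_zero, hcross_abs hkj,
          ENNReal.ofReal_mul (habs_nonneg s k)]
    refine ne_top_of_le_ne_top ?_ (ENNReal.tsum_le_tsum hbound)
    rw [ENNReal.tsum_add]
    have hEfin : ∀ (u : ℝ), 0 ≤ u → (∑' k, ENNReal.ofReal (∫ ω, |F u k ω| ∂ℙ)) ≠ ⊤ := by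
      intro u hu
      have hle : ∀ k, ENNReal.ofReal (∫ ω, |F u k ω| ∂ℙ)
          ≤ ENNReal.ofReal (2 * (p k * u)) :=
        fun k => ENNReal.ofReal_le_ofReal (habs_le u hu k)
      refine ne_top_of_le_ne_top ?_ (ENNReal.tsum_le_tsum hle)
      rw [← ENNReal.ofReal_tsum_of_nonneg (fun k => by nlinarith [(hp0 k).le])
        (((hpsum.mul_right u).mul_left 2))]
      exact ENNReal.ofReal_ne_top
    apply ENNReal.add_ne_top.mpr
    constructor
    · rw [ENNReal.tsum_prod']
      have : ∀ k : ℕ, ∑' j, ENNReal.ofReal (∫ ω, |F s k ω| ∂ℙ)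
          * ENNReal.ofReal (∫ ω, |F t j ω| ∂ℙ)
          = ENNReal.ofReal (∫ ω, |F s k ω| ∂ℙ)
            * ∑' j, ENNReal.ofReal (∫ ω, |F t j ω| ∂ℙ) := fun k => ENNReal.tsum_mul_left
      rw [tsum_congr this, ENNReal.tsum_mul_right]
      exact ENNReal.mul_ne_top (hEfin s hs) (hEfin t ht)
    · rw [ENNReal.tsum_prod']
      have : ∀ k : ℕ, (∑' j, if k = j then ENNReal.ofReal (∫ ω, |F s k ω| ∂ℙ) else 0)
          = ENNReal.ofReal (∫ ω, |F s k ω| ∂ℙ) := by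
        intro k
        rw [tsum_eq_single k (fun j hjk => if_neg (Ne.symm hjk))]
        simp
      rw [tsum_congr this]
      exact hEfin s hs
  -- exchange integral and sum
  have hint_eq : ∫ ω, Z1 s ω * Z1 t ω ∂ℙ
      = ∑' (z : ℕ × ℕ), ∫ ω, F s z.1 ω * F t z.2 ω ∂ℙ := by
    rw [integral_congr_ae hprod]
    exact integral_tsum
      (fun z => ((hFmeas s z.1).mul (hFmeas t z.2)).aestronglyMeasurable) hfin
  -- diagonal terms
  have hpointwise : ∀ k, (fun ω => F s k ω * F t k ω) = (fun ω =>
      (if N k s ω ≠ 0 then (1:ℝ) else 0)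
      - (1 - Real.exp (-(p k * s))) * (if N k t ω ≠ 0 then (1:ℝ) else 0)
      - (1 - Real.exp (-(p k * t))) * (if N k s ω ≠ 0 then (1:ℝ) else 0)
      + (1 - Real.exp (-(p k * s))) * (1 - Real.exp (-(p k * t)))) := by
    intro k; funext ω
    show ε k * ((if N k s ω ≠ 0 then (1:ℝ) else 0) - (1 - Real.exp (-(p k * s))))
      * (ε k * ((if N k t ω ≠ 0 then (1:ℝ) else 0) - (1 - Real.exp (-(p k * t))))) = _
    by_cases hA : N k s ω = 0
    · rcases hε k with hek | hek <;> by_cases hB : N k t ω = 0 <;>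
        simp [hek, hA, hB] <;> ring
    · have hB : N k t ω ≠ 0 := by
        intro h
        exact hA (Nat.le_zero.mp (h ▸ hmono k ω hst))
      rcases hε k with hek | hek <;> simp [hek, hA, hB] <;> ring
  have hdiag : ∀ k, ∫ ω, F s k ω * F t k ω ∂ℙ
      = Real.exp (-(p k * t)) - Real.exp (-(p k * (s + t))) := by
    intro k
    rw [hpointwise k]
    have i1 := hind_int k s
    have i2 : Integrable (fun ω => (1 - Real.exp (-(p k * s)))
        * (if N k t ω ≠ 0 then (1:ℝ) else 0)) ℙ := (hind_int k t).const_mul _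
    have i3 : Integrable (fun ω => (1 - Real.exp (-(p k * t)))
        * (if N k s ω ≠ 0 then (1:ℝ) else 0)) ℙ := (hind_int k s).const_mul _
    have i12 : Integrable (fun ω => (if N k s ω ≠ 0 then (1:ℝ) else 0)
        - (1 - Real.exp (-(p k * s))) * (if N k t ω ≠ 0 then (1:ℝ) else 0)) ℙ := i1.sub i2
    have i123 : Integrable (fun ω => (if N k s ω ≠ 0 then (1:ℝ) else 0)
        - (1 - Real.exp (-(p k * s))) * (if N k t ω ≠ 0 then (1:ℝ) else 0)
        - (1 - Real.exp (-(p k * t))) * (if N k s ω ≠ 0 then (1:ℝ) else 0)) ℙ := i12.sub i3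
    rw [integral_add i123 (integrable_const _),
      integral_sub i12 i3, integral_sub i1 i2,
      integral_const_mul, integral_const_mul, hint_ind k s hs, hint_ind k t ht,
      integral_const]
    have hx : Real.exp (-(p k * (s + t)))
        = Real.exp (-(p k * s)) * Real.exp (-(p k * t)) := by
      rw [← Real.exp_add]; ring_nf
    have hu := measure_univ (μ := (ℙ : Measure Ω))
    simp only [hu, probReal_univ, ENNReal.toReal_one, smul_eq_mul, one_mul]
    rw [hx]; ring
  -- value of each term
  have hEz : ∀ z : ℕ × ℕ, ∫ ω, F s z.1 ω * F t z.2 ω ∂ℙ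
      = if z.1 = z.2 then Real.exp (-(p z.1 * t)) - Real.exp (-(p z.1 * (s + t))) else 0 := by
    rintro ⟨k, j⟩
    by_cases h : k = j
    · subst h; simpa using hdiag k
    · simpa [h] using hcross h
  -- summability of diagonal values
  have hd_summable : Summable (fun k => Real.exp (-(p k * t)) - Real.exp (-(p k * (s + t)))) := by
    apply ((hqsum (s + t) hst2).sub (hqsum t ht)).congr
    intro k; ring
  have hd_nonneg : ∀ k, 0 ≤ Real.exp (-(p k * t)) - Real.exp (-(p k * (s + t))) := by
    intro k
    have h : -(p k * (s + t)) ≤ -(p k * t) := by nlinarith [(hp0 k).le]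
    linarith [Real.exp_le_exp.mpr h]
  -- collapse the double sum
  have htsum_pairs : (∑' (z : ℕ × ℕ), ∫ ω, F s z.1 ω * F t z.2 ω ∂ℙ)
      = ∑' k, (Real.exp (-(p k * t)) - Real.exp (-(p k * (s + t)))) := by
    rw [tsum_congr hEz]
    have hrow : ∀ k : ℕ, Summable (fun j => if k = j
        then Real.exp (-(p k * t)) - Real.exp (-(p k * (s + t))) else 0) := by
      intro k
      apply summable_of_ne_finset_zero (s := {k})
      intro j hj
      simp only [Finset.mem_singleton] at hj
      exact if_neg fun h => hj h.symm
    have hsummE : Summable (fun z : ℕ × ℕ => if z.1 = z.2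
        then Real.exp (-(p z.1 * t)) - Real.exp (-(p z.1 * (s + t))) else 0) := by
      apply (summable_prod_of_nonneg ?_).mpr
      constructor
      · exact fun k => hrow k
      · apply hd_summable.congr
        intro k
        rw [tsum_eq_single k (fun j hjk => if_neg fun h => hjk h.symm)]
        simp
      · intro z
        dsimp only
        split
        · exact hd_nonneg _
        · exact le_rfl
    rw [Summable.tsum_prod' hsummE hrow]
    apply tsum_congr
    intro k
    rw [tsum_eq_single k (fun j hjk => if_neg fun h => hjk h.symm)]
    simp
  -- the right-hand side
  have hRHS : V (s + t) - V t
      = ∑' k, (Real.exp (-(p k * t)) - Real.exp (-(p k * (s + t)))) := by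
    rw [hV, hV, ← Summable.tsum_sub (hqsum (s + t) hst2) (hqsum t ht)]
    apply tsum_congr
    intro k; ring
  rw [hint_eq, htsum_pairs, hRHS]
end

section
/- For α ∈ (0,1), the kernel K(s,t) = (s+t)^α - max(s,t)^α on [0,∞)² is symmetric and positive semidefinite, i.e., for all n, all t_1,...,t_n ≥ 0 and all real c_1,...,c_n, ∑_{i,j} c_i c_j K(t_i,t_j) ≥ 0. -/
open Real

open MeasureTheory Set

private lemma min_kernel_psd {n : ℕ} (a c : Fin n → ℝ) (ha0 : ∀ i, 0 ≤ a i) (ha1 : ∀ i, a i ≤ 1) :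
    (∑ i, c i * a i) ^ 2 ≤ ∑ i, ∑ j, c i * c j * min (a i) (a j) := by
  classical
  set μ : Measure ℝ := volume.restrict (Ico (0:ℝ) 1) with hμ
  have hμuniv : μ univ = 1 := by simp [hμ, Real.volume_Ico]
  haveI : IsFiniteMeasure μ := ⟨by rw [hμuniv]; exact ENNReal.one_lt_top⟩
  have hμIco : ∀ b : ℝ, 0 ≤ b → b ≤ 1 → μ (Ico (0:ℝ) b) = ENNReal.ofReal b := by
    intro b hb hb1
    rw [hμ, Measure.restrict_apply measurableSet_Ico,
      inter_eq_self_of_subset_left (Ico_subset_Ico le_rfl hb1), Real.volume_Ico, sub_zero]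
  set F : ℝ → ℝ := fun x => ∑ i, (Ico (0:ℝ) (a i)).indicator (fun _ => c i) x with hF
  have hintind : ∀ (b r : ℝ), Integrable ((Ico (0:ℝ) b).indicator (fun _ => r)) μ := by
    intro b r
    refine (integrable_indicator_iff measurableSet_Ico).2 ?_
    exact integrableOn_const (lt_of_le_of_lt (measure_mono (subset_univ _))
      (by rw [hμuniv]; exact ENNReal.one_lt_top)).ne
  have hintF : Integrable F μ := integrable_finset_sum _ (fun i _ => hintind _ _)
  have hind_int : ∀ b r : ℝ, 0 ≤ b → b ≤ 1 →
      ∫ x, (Ico (0:ℝ) b).indicator (fun _ => r) x ∂μ = r * b := by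
    intro b r hb hb1
    rw [integral_indicator measurableSet_Ico, setIntegral_const, measureReal_def, hμIco b hb hb1,
      smul_eq_mul, ENNReal.toReal_ofReal hb, mul_comm]
  have hintegF : ∫ x, F x ∂μ = ∑ i, c i * a i := by
    rw [hF, integral_finset_sum _ (fun i _ => hintind _ _)]
    exact Finset.sum_congr rfl fun i _ => hind_int _ _ (ha0 i) (ha1 i)
  have hFsq : ∀ x, F x ^ 2 = ∑ i, ∑ j, (Ico (0:ℝ) (min (a i) (a j))).indicator
      (fun _ => c i * c j) x := by
    intro x
    rw [sq, hF, Finset.sum_mul_sum]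
    refine Finset.sum_congr rfl fun i _ => Finset.sum_congr rfl fun j _ => ?_
    rw [← Set.inter_indicator_mul, Ico_inter_Ico, max_self]
  have hintegFsq : ∫ x, F x ^ 2 ∂μ = ∑ i, ∑ j, c i * c j * min (a i) (a j) := by
    simp_rw [hFsq]
    rw [integral_finset_sum _ (fun i _ => integrable_finset_sum _ (fun j _ => hintind _ _))]
    refine Finset.sum_congr rfl fun i _ => ?_
    rw [integral_finset_sum _ (fun j _ => hintind _ _)]
    exact Finset.sum_congr rfl fun j _ => hind_int _ _ (le_min (ha0 i) (ha0 j))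
      (min_le_of_left_le (ha1 i))
  set m : ℝ := ∑ i, c i * a i with hm
  have hintFsq : Integrable (fun x => F x ^ 2) μ := by
    have := integrable_finset_sum (μ := μ) Finset.univ
      (f := fun i x => ∑ j, (Ico (0:ℝ) (min (a i) (a j))).indicator (fun _ => c i * c j) x)
      (fun i _ => integrable_finset_sum _ (fun j _ => hintind _ _))
    exact this.congr (Filter.Eventually.of_forall fun x => (hFsq x).symm)
  have key : 0 ≤ ∫ x, (F x - m) ^ 2 ∂μ := integral_nonneg fun x => sq_nonneg _
  have expand : ∫ x, (F x - m) ^ 2 ∂μ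
      = ∫ x, F x ^ 2 ∂μ - 2 * m * ∫ x, F x ∂μ + m ^ 2 := by
    have h1 : ∀ x, (F x - m) ^ 2 = F x ^ 2 - 2 * m * F x + m ^ 2 := by intro x; ring
    simp_rw [h1]
    rw [integral_add (by exact (hintFsq.sub ((hintF.const_mul (2*m)))) )
        (integrable_const _), integral_sub hintFsq (hintF.const_mul (2*m)),
      integral_const, integral_const_mul, measureReal_def, hμuniv]
    simp
  rw [expand, hintegF, hintegFsq] at key
  nlinarith [key]

private lemma int_g {α : ℝ} (hα0 : 0 < α) (hα1 : α < 1) {x : ℝ} (hx : 0 ≤ x) :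
    IntegrableOn (fun u : ℝ => (1 - Real.exp (-(x*u))) * u ^ (-α-1)) (Ioi 0) := by
  have hmg : Measurable (fun u : ℝ => (1 - Real.exp (-(x*u))) * u ^ (-α-1)) :=
    (measurable_const.sub ((measurable_id.const_mul x).neg.exp)).mul (by measurability)
  have hbound1 : ∀ u ∈ Ioc (0:ℝ) 1,
      ‖(1 - Real.exp (-(x*u))) * u ^ (-α-1)‖ ≤ x * u ^ (-α) := by
    intro u hu
    have hu0 : 0 < u := hu.1
    have he1 : Real.exp (-(x*u)) ≤ 1 := Real.exp_le_one_iff.2 (by nlinarith)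
    have he2 : 1 - x*u ≤ Real.exp (-(x*u)) := by
      have := Real.add_one_le_exp (-(x*u)); linarith
    have hpow : (0:ℝ) ≤ u ^ (-α-1) := (Real.rpow_pos_of_pos hu0 _).le
    rw [norm_mul, Real.norm_of_nonneg hpow, Real.norm_of_nonneg (by linarith)]
    calc (1 - Real.exp (-(x*u))) * u ^ (-α-1) ≤ (x*u) * u ^ (-α-1) := by
          apply mul_le_mul_of_nonneg_right (by linarith) hpow
      _ = x * u ^ (-α) := by
          rw [mul_assoc]
          congr 1
          calc u * u ^ (-α-1) = u^(1:ℝ) * u ^ (-α-1) := by rw [Real.rpow_one]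
            _ = u ^ (1 + (-α-1)) := (Real.rpow_add hu0 _ _).symm
            _ = u ^ (-α) := by ring_nf
  have h1 : IntegrableOn (fun u : ℝ => (1 - Real.exp (-(x*u))) * u ^ (-α-1)) (Ioc 0 1) := by
    have hdom : IntegrableOn (fun u : ℝ => x * u ^ (-α)) (Ioc (0:ℝ) 1) := by
      have := (intervalIntegral.intervalIntegrable_rpow' (a := (0:ℝ)) (b := 1) (r := -α)
        (by linarith)).const_mul x
      rwa [intervalIntegrable_iff, uIoc_of_le (by norm_num : (0:ℝ) ≤ 1)] at this
    exact Integrable.mono' hdom hmg.aestronglyMeasurable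
      (ae_restrict_of_forall_mem measurableSet_Ioc hbound1)
  have h2 : IntegrableOn (fun u : ℝ => (1 - Real.exp (-(x*u))) * u ^ (-α-1)) (Ioi 1) := by
    have hdom : IntegrableOn (fun u : ℝ => u ^ (-α-1)) (Ioi (1:ℝ)) :=
      integrableOn_Ioi_rpow_of_lt (by linarith) one_pos
    refine Integrable.mono' hdom hmg.aestronglyMeasurable
      (ae_restrict_of_forall_mem measurableSet_Ioi ?_)
    intro u hu
    have hu0 : (0:ℝ) < u := lt_trans one_pos hu
    have he1 : Real.exp (-(x*u)) ≤ 1 := Real.exp_le_one_iff.2 (by nlinarith)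
    have he0 : 0 < Real.exp (-(x*u)) := Real.exp_pos _
    have hpow : (0:ℝ) ≤ u ^ (-α-1) := (Real.rpow_pos_of_pos hu0 _).le
    rw [norm_mul, Real.norm_of_nonneg hpow, Real.norm_of_nonneg (by linarith)]
    nlinarith
  have := h1.union h2
  rwa [Ioc_union_Ioi_eq_Ioi (by norm_num : (0:ℝ) ≤ 1)] at this

private lemma scale_g {α : ℝ} {x : ℝ} (hx : 0 < x) :
    ∫ u in Ioi (0:ℝ), (1 - Real.exp (-(x*u))) * u ^ (-α-1)
      = x ^ α * ∫ v in Ioi (0:ℝ), (1 - Real.exp (-v)) * v ^ (-α-1) := by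
  set C : ℝ := ∫ v in Ioi (0:ℝ), (1 - Real.exp (-v)) * v ^ (-α-1) with hC
  set I : ℝ := ∫ u in Ioi (0:ℝ), (1 - Real.exp (-(x*u))) * u ^ (-α-1) with hI
  have h2 : ∫ u in Ioi (0:ℝ), (1 - Real.exp (-(x*u))) * (x*u) ^ (-α-1)
      = x ^ (-α-1) * I := by
    rw [hI, ← integral_const_mul]
    refine setIntegral_congr_fun measurableSet_Ioi fun u hu => ?_
    rw [Real.mul_rpow hx.le (le_of_lt hu)]
    ring
  have h3 := integral_comp_mul_left_Ioi
    (fun v => (1 - Real.exp (-v)) * v ^ (-α-1)) 0 hx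
  rw [mul_zero] at h3
  have key : x ^ (-α-1) * I = x⁻¹ * C := by
    rw [← h2, h3, smul_eq_mul, hC]
  have hxx : x ^ (α+1) * x ^ (-α-1) = 1 := by
    rw [← Real.rpow_add hx]; norm_num
  have step : I = x ^ (α+1) * (x ^ (-α-1) * I) := by
    rw [← mul_assoc, hxx, one_mul]
  rw [step, key, ← mul_assoc]
  congr 1
  rw [← Real.rpow_neg_one x, ← Real.rpow_add hx]
  norm_num

private lemma value_g {α : ℝ} (hα0 : 0 < α) {x : ℝ} (hx : 0 ≤ x) :
    ∫ u in Ioi (0:ℝ), (1 - Real.exp (-(x*u))) * u ^ (-α-1)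
      = x ^ α * ∫ v in Ioi (0:ℝ), (1 - Real.exp (-v)) * v ^ (-α-1) := by
  rcases hx.lt_or_eq with h | h
  · exact scale_g h
  · subst h
    simp [Real.zero_rpow hα0.ne']

private lemma Cpos {α : ℝ} (hα0 : 0 < α) (hα1 : α < 1) :
    0 < ∫ v in Ioi (0:ℝ), (1 - Real.exp (-v)) * v ^ (-α-1) := by
  have hint : IntegrableOn (fun v : ℝ => (1 - Real.exp (-v)) * v ^ (-α-1)) (Ioi 0) := by
    have := int_g hα0 hα1 (x := 1) zero_le_one
    simpa using this
  have hnn : 0 ≤ᵐ[volume.restrict (Ioi (0:ℝ))]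
      fun v : ℝ => (1 - Real.exp (-v)) * v ^ (-α-1) := by
    refine ae_restrict_of_forall_mem measurableSet_Ioi fun v hv => ?_
    have h1 : Real.exp (-v) ≤ 1 := Real.exp_le_one_iff.2 (by simpa using (le_of_lt hv))
    exact mul_nonneg (by linarith) (Real.rpow_pos_of_pos hv _).le
  rw [setIntegral_pos_iff_support_of_nonneg_ae hnn hint]
  have hsub : Ioi (0:ℝ) ⊆ Function.support (fun v : ℝ => (1 - Real.exp (-v)) * v ^ (-α-1)) ∩
      Ioi 0 := by
    intro v hv
    refine ⟨?_, hv⟩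
    have h1 : Real.exp (-v) < 1 := Real.exp_lt_one_iff.2 (by simpa using hv)
    exact ne_of_gt (mul_pos (by linarith) (Real.rpow_pos_of_pos hv _))
  calc (0:ENNReal) < volume (Ioi (0:ℝ)) := by rw [Real.volume_Ioi]; exact ENNReal.zero_lt_top
    _ ≤ _ := measure_mono hsub

/-- For `α ∈ (0,1)`, the kernel `K s t = (s+t)^α - (max s t)^α` on `[0,∞)²` is symmetric
and positive semidefinite. -/
theorem kernel_occupancy_Z1_posSemidef
    (α : ℝ) (hα0 : 0 < α) (hα1 : α < 1)
    (K : ℝ → ℝ → ℝ) (hK : ∀ s t, K s t = (s + t) ^ α - (max s t) ^ α) :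
    (∀ s t : ℝ, 0 ≤ s → 0 ≤ t → K s t = K t s) ∧
    (∀ (n : ℕ) (t : Fin n → ℝ), (∀ i, 0 ≤ t i) → ∀ c : Fin n → ℝ,
      0 ≤ ∑ i : Fin n, ∑ j : Fin n, c i * c j * K (t i) (t j)) := by
  classical
    refine ⟨fun s t _ _ => by rw [hK, hK, add_comm, max_comm], ?_⟩
  intro n t ht c
  set f : ℝ → ℝ → ℝ := fun x u => (1 - Real.exp (-(x*u))) * u ^ (-α-1) with hf
  set C : ℝ := ∫ v in Ioi (0:ℝ), (1 - Real.exp (-v)) * v ^ (-α-1) with hCdef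
  have hC : 0 < C := Cpos hα0 hα1
  set Q : ℝ := ∑ i : Fin n, ∑ j : Fin n, c i * c j * K (t i) (t j) with hQdef
  have hint : ∀ (i j : Fin n), IntegrableOn
      (fun u => c i * c j * (f (t i + t j) u - f (max (t i) (t j)) u)) (Ioi (0:ℝ)) := by
    intro i j
    exact (((int_g hα0 hα1 (add_nonneg (ht i) (ht j))).sub
      (int_g hα0 hα1 (le_max_of_le_left (ht i)))).const_mul _)
  have hterm : ∀ i j : Fin n, C * (c i * c j * K (t i) (t j))
      = ∫ u in Ioi (0:ℝ), c i * c j * (f (t i + t j) u - f (max (t i) (t j)) u) := by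
    intro i j
    rw [integral_const_mul, integral_sub (int_g hα0 hα1 (add_nonneg (ht i) (ht j)))
      (int_g hα0 hα1 (le_max_of_le_left (ht i)))]
    rw [value_g hα0 (add_nonneg (ht i) (ht j)), value_g hα0 (le_max_of_le_left (ht i))]
    rw [hK, ← hCdef]
    ring
  have hCQ : C * Q = ∫ u in Ioi (0:ℝ),
      ∑ i : Fin n, ∑ j : Fin n, c i * c j * (f (t i + t j) u - f (max (t i) (t j)) u) := by
    rw [integral_finset_sum _ (fun i _ => integrable_finset_sum _ (fun j _ => hint i j))]
    rw [hQdef, Finset.mul_sum]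
    refine Finset.sum_congr rfl fun i _ => ?_
    rw [integral_finset_sum _ (fun j _ => hint i j), Finset.mul_sum]
    exact Finset.sum_congr rfl fun j _ => hterm i j
  have hpos : 0 ≤ C * Q := by
    rw [hCQ]
    refine setIntegral_nonneg measurableSet_Ioi fun u hu => ?_
    have hu0 : (0:ℝ) < u := hu
    set a : Fin n → ℝ := fun i => Real.exp (-(t i * u)) with ha
    have ha0 : ∀ i, 0 ≤ a i := fun i => (Real.exp_pos _).le
    have ha1 : ∀ i, a i ≤ 1 := fun i =>
      Real.exp_le_one_iff.2 (by simpa using mul_nonneg (ht i) hu0.le)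
    have hterm2 : ∀ i j : Fin n,
        c i * c j * (f (t i + t j) u - f (max (t i) (t j)) u)
        = (c i * c j * min (a i) (a j) - (c i * a i) * (c j * a j)) * u ^ (-α-1) := by
      intro i j
      have he1 : Real.exp (-((t i + t j) * u)) = a i * a j := by
        rw [ha, ← Real.exp_add]; congr 1; ring
      have he2 : Real.exp (-(max (t i) (t j) * u)) = min (a i) (a j) := by
        rcases le_total (t i) (t j) with h | h
        · rw [max_eq_right h, min_eq_right (by
            rw [ha]; exact Real.exp_le_exp.2 (by nlinarith))]
        · rw [max_eq_left h, min_eq_left (by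
            rw [ha]; exact Real.exp_le_exp.2 (by nlinarith))]
      rw [hf]
      simp only
      rw [he1, he2]
      ring
    simp_rw [hterm2]
    have hsum : ∑ i : Fin n, ∑ j : Fin n,
        (c i * c j * min (a i) (a j) - (c i * a i) * (c j * a j)) * u ^ (-α-1)
        = ((∑ i : Fin n, ∑ j : Fin n, c i * c j * min (a i) (a j))
            - (∑ i : Fin n, c i * a i) ^ 2) * u ^ (-α-1) := by
      rw [sq, Finset.sum_mul_sum, sub_mul]
      simp only [Finset.sum_mul]
      rw [← Finset.sum_sub_distrib]
      refine Finset.sum_congr rfl fun i _ => ?_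
      rw [← Finset.sum_sub_distrib]
      exact Finset.sum_congr rfl fun j _ => by ring
    rw [hsum]
    exact mul_nonneg (sub_nonneg.2 (min_kernel_psd a c ha0 ha1))
      (Real.rpow_pos_of_pos hu0 _).le
  nlinarith [hpos, hC]
end

section
/- For α ∈ (0,1), the kernel K(s,t) = (s+t)^α - |s-t|^α on [0,∞)² is symmetric and positive semidefinite. -/
open Real MeasureTheory Set

lemma kbif_integrable {α : ℝ} (hα0 : 0 < α) (hα1 : α < 1) (c : ℝ) :
    IntegrableOn (fun u : ℝ => (1 - Real.cos (c * u)) * u ^ (-1 - α)) (Set.Ioi 0) := by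
  have hmeas : AEStronglyMeasurable (fun u : ℝ => (1 - Real.cos (c * u)) * u ^ (-1 - α))
      (volume.restrict (Set.Ioi (0:ℝ))) := by
    apply Measurable.aestronglyMeasurable
    fun_prop
  have h01 : IntegrableOn (fun u : ℝ => (1 - Real.cos (c * u)) * u ^ (-1 - α)) (Set.Ioo 0 1) := by
    have hg : IntegrableOn (fun u : ℝ => c ^ 2 / 2 * u ^ (1 - α)) (Set.Ioo (0:ℝ) 1) :=
      (((intervalIntegral.integrableOn_Ioo_rpow_iff one_pos).2 (by linarith)).const_mul _)
    refine Integrable.mono' hg (hmeas.mono_measure (Measure.restrict_mono Ioo_subset_Ioi_self le_rfl)) ?_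
    filter_upwards [ae_restrict_mem measurableSet_Ioo] with u hu
    have hu0 : 0 < u := hu.1
    have h1 : 0 ≤ 1 - Real.cos (c * u) := by nlinarith [Real.cos_le_one (c * u)]
    have h2 : 1 - Real.cos (c * u) ≤ (c * u) ^ 2 / 2 := by
      nlinarith [Real.one_sub_sq_div_two_le_cos (x := c * u)]
    rw [Real.norm_eq_abs, abs_of_nonneg (mul_nonneg h1 (rpow_nonneg hu0.le _))]
    have : u ^ (1 - α) = u ^ (2:ℝ) * u ^ (-1 - α) := by
      rw [← Real.rpow_add hu0]; congr 1; ring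
    rw [this]
    have hu2 : u ^ (2:ℝ) = u ^ 2 := by
      rw [Real.rpow_two]
    calc (1 - Real.cos (c * u)) * u ^ (-1 - α) ≤ ((c*u)^2/2) * u ^ (-1 - α) := by
          exact mul_le_mul_of_nonneg_right h2 (rpow_nonneg hu0.le _)
      _ = c ^ 2 / 2 * (u ^ (2:ℝ) * u ^ (-1 - α)) := by rw [hu2]; ring
  have h1i : IntegrableOn (fun u : ℝ => (1 - Real.cos (c * u)) * u ^ (-1 - α)) (Set.Ici 1) := by
    rw [integrableOn_Ici_iff_integrableOn_Ioi]
    have hg : IntegrableOn (fun u : ℝ => 2 * u ^ (-1 - α)) (Set.Ioi (1:ℝ)) :=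
      ((integrableOn_Ioi_rpow_of_lt (by linarith) one_pos).const_mul _)
    refine Integrable.mono' hg (hmeas.mono_measure (Measure.restrict_mono (Ioi_subset_Ioi one_pos.le) le_rfl)) ?_
    filter_upwards [ae_restrict_mem measurableSet_Ioi] with u hu
    have hu0 : (0:ℝ) < u := lt_trans one_pos hu
    have h1 : 0 ≤ 1 - Real.cos (c * u) := by nlinarith [Real.cos_le_one (c * u)]
    have h2 : 1 - Real.cos (c * u) ≤ 2 := by nlinarith [Real.neg_one_le_cos (c * u)]
    rw [Real.norm_eq_abs, abs_of_nonneg (mul_nonneg h1 (rpow_nonneg hu0.le _))]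
    exact mul_le_mul_of_nonneg_right h2 (rpow_nonneg hu0.le _)
  have : Set.Ioi (0:ℝ) ⊆ Set.Ioo 0 1 ∪ Set.Ici 1 := by
    intro x hx; rcases lt_or_ge x 1 with h | h
    · exact Or.inl ⟨hx, h⟩
    · exact Or.inr h
  exact (h01.union h1i).mono_set this

noncomputable def kbifI (α : ℝ) : ℝ := ∫ u in Set.Ioi (0:ℝ), (1 - Real.cos u) * u ^ (-1 - α)

lemma kbifI_pos {α : ℝ} (hα0 : 0 < α) (hα1 : α < 1) : 0 < kbifI α := by
  have hint : IntegrableOn (fun u : ℝ => (1 - Real.cos u) * u ^ (-1 - α)) (Set.Ioi 0) := by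
    simpa using kbif_integrable hα0 hα1 1
  rw [kbifI, setIntegral_pos_iff_support_of_nonneg_ae ?_ hint]
  · refine lt_of_lt_of_le ?_ (measure_mono (?_ : Set.Ioo (π/2) π ⊆ _))
    · rw [Real.volume_Ioo]
      simp only [ENNReal.ofReal_pos]
      linarith [Real.pi_pos]
    · intro u hu
      have hu0 : 0 < u := lt_trans (by positivity) hu.1
      have hcos : Real.cos u < 1 := by
        calc Real.cos u ≤ 0 := Real.cos_nonpos_of_pi_div_two_le_of_le hu.1.le (by linarith [hu.2, Real.pi_pos])
          _ < 1 := one_pos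
      refine ⟨?_, hu0⟩
      simp only [Function.mem_support]
      exact ne_of_gt (mul_pos (by linarith) (Real.rpow_pos_of_pos hu0 _))
  · filter_upwards [ae_restrict_mem measurableSet_Ioi] with u hu
    have h1 : Real.cos u ≤ 1 := Real.cos_le_one u
    have h2 : (0:ℝ) < u := hu
    exact mul_nonneg (by linarith) (rpow_nonneg h2.le _)

lemma kbif_scaling {α : ℝ} (hα0 : 0 < α) (hα1 : α < 1) {x : ℝ} (hx : 0 ≤ x) :
    ∫ u in Set.Ioi (0:ℝ), (1 - Real.cos (x * u)) * u ^ (-1 - α) = x ^ α * kbifI α := by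
  rcases eq_or_lt_of_le hx with rfl | hx
  · simp [Real.zero_rpow hα0.ne']
  · have key : ∀ u ∈ Set.Ioi (0:ℝ),
        (1 - Real.cos (x * u)) * u ^ (-1 - α)
          = x ^ (1 + α) * ((1 - Real.cos (x * u)) * (x * u) ^ (-1 - α)) := by
      intro u hu
      have hu0 : (0:ℝ) < u := hu
      rw [Real.mul_rpow hx.le hu0.le]
      have : x ^ (1 + α) * x ^ (-1 - α) = 1 := by
        rw [← Real.rpow_add hx]; norm_num
      calc (1 - Real.cos (x * u)) * u ^ (-1 - α)
          = (x ^ (1 + α) * x ^ (-1 - α)) * ((1 - Real.cos (x * u)) * u ^ (-1 - α)) := by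
            rw [this]; ring
        _ = x ^ (1 + α) * ((1 - Real.cos (x * u)) * (x ^ (-1 - α) * u ^ (-1 - α))) := by ring
    rw [setIntegral_congr_fun measurableSet_Ioi key, integral_const_mul]
    have := integral_comp_mul_left_Ioi (fun v => (1 - Real.cos v) * v ^ (-1 - α)) 0 hx
    simp only [mul_zero, smul_eq_mul] at this
    rw [this, ← kbifI, ← mul_assoc]
    congr 1
    rw [← Real.rpow_neg_one x, ← Real.rpow_add hx]
    norm_num

/-- For `α ∈ (0,1)`, the kernel `K s t = (s+t)^α - |s-t|^α` on `[0,∞)²` is symmetric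
and positive semidefinite. -/
theorem kernel_bifBM_posSemidef
    (α : ℝ) (hα0 : 0 < α) (hα1 : α < 1)
    (K : ℝ → ℝ → ℝ) (hK : ∀ s t, K s t = (s + t) ^ α - |s - t| ^ α) :
    (∀ s t : ℝ, 0 ≤ s → 0 ≤ t → K s t = K t s) ∧
    (∀ (n : ℕ) (t : Fin n → ℝ), (∀ i, 0 ≤ t i) → ∀ c : Fin n → ℝ,
      0 ≤ ∑ i : Fin n, ∑ j : Fin n, c i * c j * K (t i) (t j)) := by
  constructor
  · intro s t _ _
    rw [hK, hK, abs_sub_comm, add_comm]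
  · intro n t ht c
    set I := kbifI α with hI
    have hIpos := kbifI_pos hα0 hα1
    -- pointwise product formula
    have hsin : ∀ s u : ℝ, ∀ r : ℝ, 2 * Real.sin (s * u) * Real.sin (r * u)
        = (1 - Real.cos ((s + r) * u)) - (1 - Real.cos ((s - r) * u)) := by
      intro s u r
      have := Real.cos_sub_cos ((s - r) * u) ((s + r) * u)
      have h1 : ((s - r) * u + (s + r) * u) / 2 = s * u := by ring
      have h2 : ((s - r) * u - (s + r) * u) / 2 = -(r * u) := by ring
      rw [h1, h2, Real.sin_neg] at this
      linarith
    -- integrability of each term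
    have hTI : ∀ i j : Fin n, IntegrableOn
        (fun u : ℝ => c i * c j * (2 * Real.sin (t i * u) * Real.sin (t j * u) * u ^ (-1 - α)))
        (Set.Ioi 0) := by
      intro i j
      apply Integrable.const_mul
      have h1 := kbif_integrable hα0 hα1 (t i + t j)
      have h2 := kbif_integrable hα0 hα1 (t i - t j)
      have hsub : IntegrableOn (fun u : ℝ =>
          (1 - Real.cos ((t i + t j) * u)) * u ^ (-1 - α)
            - (1 - Real.cos ((t i - t j) * u)) * u ^ (-1 - α)) (Set.Ioi 0) := h1.sub h2
      refine hsub.congr_fun (fun u hu => ?_) measurableSet_Ioi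
      rw [hsin]; ring
    -- value of each term integral
    have hTV : ∀ i j : Fin n,
        ∫ u in Set.Ioi (0:ℝ),
          c i * c j * (2 * Real.sin (t i * u) * Real.sin (t j * u) * u ^ (-1 - α))
        = c i * c j * K (t i) (t j) * I := by
      intro i j
      rw [integral_const_mul]
      have h1 := kbif_integrable hα0 hα1 (t i + t j)
      have h2 := kbif_integrable hα0 hα1 (t i - t j)
      have heq : ∫ u in Set.Ioi (0:ℝ),
          2 * Real.sin (t i * u) * Real.sin (t j * u) * u ^ (-1 - α)
          = (∫ u in Set.Ioi (0:ℝ), (1 - Real.cos ((t i + t j) * u)) * u ^ (-1 - α))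
            - ∫ u in Set.Ioi (0:ℝ), (1 - Real.cos ((t i - t j) * u)) * u ^ (-1 - α) := by
        rw [← integral_sub h1 h2]
        refine setIntegral_congr_fun measurableSet_Ioi (fun u hu => ?_)
        rw [hsin]; ring
      have habs : ∫ u in Set.Ioi (0:ℝ), (1 - Real.cos ((t i - t j) * u)) * u ^ (-1 - α)
          = ∫ u in Set.Ioi (0:ℝ), (1 - Real.cos (|t i - t j| * u)) * u ^ (-1 - α) := by
        refine setIntegral_congr_fun measurableSet_Ioi (fun u hu => ?_)
        have : |t i - t j| * u = |(t i - t j) * u| := by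
          rw [abs_mul, abs_of_nonneg (a := u) (le_of_lt hu)]
        rw [this, Real.cos_abs]
      rw [heq, habs, kbif_scaling hα0 hα1 (add_nonneg (ht i) (ht j)),
        kbif_scaling hα0 hα1 (abs_nonneg _), hK]
      ring
    -- sum over all terms
    have hsum : (∑ i : Fin n, ∑ j : Fin n, c i * c j * K (t i) (t j)) * I
        = ∫ u in Set.Ioi (0:ℝ),
            ∑ i : Fin n, ∑ j : Fin n,
              c i * c j * (2 * Real.sin (t i * u) * Real.sin (t j * u) * u ^ (-1 - α)) := by
      rw [Finset.sum_mul]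
      rw [integral_finset_sum _ (fun i _ => integrable_finset_sum _ (fun j _ => hTI i j))]
      refine Finset.sum_congr rfl (fun i _ => ?_)
      rw [Finset.sum_mul, integral_finset_sum _ (fun j _ => hTI i j)]
      exact Finset.sum_congr rfl (fun j _ => (hTV i j).symm)
    have hnn : 0 ≤ (∑ i : Fin n, ∑ j : Fin n, c i * c j * K (t i) (t j)) * I := by
      rw [hsum]
      refine setIntegral_nonneg measurableSet_Ioi (fun u hu => ?_)
      have hptw : ∑ i : Fin n, ∑ j : Fin n,
          c i * c j * (2 * Real.sin (t i * u) * Real.sin (t j * u) * u ^ (-1 - α))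
          = 2 * u ^ (-1 - α) * (∑ i : Fin n, c i * Real.sin (t i * u)) ^ 2 := by
        rw [sq, Finset.sum_mul_sum, Finset.mul_sum]
        refine Finset.sum_congr rfl (fun i _ => ?_)
        rw [Finset.mul_sum]
        exact Finset.sum_congr rfl (fun j _ => by ring)
      rw [hptw]
      have : (0:ℝ) < u := hu
      positivity
    by_contra h
    push_neg at h
    exact absurd hnn (not_le.2 (mul_neg_of_neg_of_pos h hIpos))
end

section
/- Let ν be the counting measure ν(t) = #{j ≥ 1 : p_j ≥ 1/t} associated to a nonincreasing probability vector (p_k), and suppose ν(t) = t^α L(t) with α ∈ (0,1) and L slowly varying. Then V(t) = ∑_{k≥1}(1 - e^{-p_k t}) satisfies V(t) ~ Γ(1-α) t^α L(t) as t → ∞. -/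
open Real Filter Topology MeasureTheory Set
open scoped ENNReal NNReal

namespace KarlinAux

/-- Real-valued counting function. -/
noncomputable def N (p : ℕ → ℝ) (s : ℝ) : ℝ := (Nat.card {j : ℕ | 1 / s ≤ p j} : ℝ)

variable {p : ℕ → ℝ}

lemma N_nonneg (p : ℕ → ℝ) (s : ℝ) : 0 ≤ N p s := Nat.cast_nonneg _

lemma summable_aux (hsum : ∑' k, p k = 1) : Summable p := by
  by_contra h
  rw [tsum_eq_zero_of_not_summable h] at hsum
  norm_num at hsum

lemma finite_set (hp : Summable p) {s : ℝ} (hs : 0 < s) :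
    {j : ℕ | 1 / s ≤ p j}.Finite := by
  have h0 : Tendsto p atTop (𝓝 0) := hp.tendsto_atTop_zero
  have h1 : ∀ᶠ j in atTop, p j < 1 / s := h0.eventually (gt_mem_nhds (by positivity))
  rw [eventually_atTop] at h1
  obtain ⟨M, hM⟩ := h1
  refine (Set.finite_Iio M).subset fun j hj => ?_
  by_contra hjM
  exact absurd (hM j (le_of_not_gt hjM)) (not_lt.mpr hj)

lemma N_nonpos_arg (hp0 : ∀ k, 0 < p k) {s : ℝ} (hs : s ≤ 0) : N p s = 0 := by
  have : {j : ℕ | 1 / s ≤ p j} = Set.univ := by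
    refine Set.eq_univ_of_forall fun j => ?_
    have h1 : 1 / s ≤ 0 := one_div_nonpos.mpr hs
    exact le_trans h1 (hp0 j).le
  rw [N, this]
  have : (Set.univ : Set ℕ).Infinite := Set.infinite_univ
  rw [this.card_eq_zero]
  norm_num

lemma N_mono (hp0 : ∀ k, 0 < p k) (hp : Summable p) : Monotone (N p) := by
  intro s s' hss'
  rcases le_or_gt s' 0 with h' | h'
  · rw [N_nonpos_arg hp0 (hss'.trans h'), N_nonpos_arg hp0 h']
  rcases le_or_gt s 0 with h | h
  · rw [N_nonpos_arg hp0 h]; exact N_nonneg p s'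
  · have hsub : {j : ℕ | 1 / s ≤ p j} ⊆ {j : ℕ | 1 / s' ≤ p j} := by
      intro j hj
      exact le_trans (one_div_le_one_div_of_le h hss') hj
    unfold N
    exact_mod_cast Nat.card_mono (finite_set hp h') hsub

lemma N_pos (hp0 : ∀ k, 0 < p k) (hp : Summable p) {t : ℝ} (ht : 1 / p 0 ≤ t) :
    1 ≤ N p t := by
  have ht0 : 0 < t := lt_of_lt_of_le (one_div_pos.mpr (hp0 0)) ht
  have h0mem : (0 : ℕ) ∈ {j : ℕ | 1 / t ≤ p j} := (one_div_le ht0 (hp0 0)).mpr ht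
  have hfin := finite_set hp ht0
  haveI := hfin.to_subtype
  haveI : Nonempty {j : ℕ | 1 / t ≤ p j} := ⟨⟨0, h0mem⟩⟩
  unfold N
  exact_mod_cast Nat.card_pos

/-- The key integral identity. -/
lemma V_eq (hp0 : ∀ k, 0 < p k) (hp : Summable p) (hsum : ∑' k, p k = 1)
    {t : ℝ} (ht : 0 < t) :
    (∑' k, (1 - Real.exp (-(p k * t)))) = ∫ u in Ioi (0:ℝ), Real.exp (-u) * N p (t / u) := by
  set f : ℕ → ℝ → ℝ := fun k => (Ioc (0:ℝ) (p k * t)).indicator fun u => Real.exp (-u) with hf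
  have hmeas : ∀ k, AEStronglyMeasurable (f k) (volume.restrict (Ioi 0)) := fun k =>
    ((continuous_exp.comp continuous_neg).aestronglyMeasurable).indicator measurableSet_Ioc
  have hbnd : ∑' k, ∫⁻ u, ‖f k u‖₊ ∂(volume.restrict (Ioi 0)) ≠ ⊤ := by
    have h1 : ∀ k, ∫⁻ u, ‖f k u‖₊ ∂(volume.restrict (Ioi 0)) ≤ ENNReal.ofReal (p k * t) := by
      intro k
      have hptw : ∀ u : ℝ, (‖f k u‖₊ : ℝ≥0∞) ≤ (Ioc (0:ℝ) (p k * t)).indicator (fun _ => 1) u := by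
        intro u
        by_cases hu : u ∈ Ioc (0:ℝ) (p k * t)
        · rw [hf]; simp only [Set.indicator_of_mem hu]
          have : Real.exp (-u) ≤ 1 := Real.exp_le_one_iff.mpr (by linarith [hu.1])
          calc (‖Real.exp (-u)‖₊ : ℝ≥0∞) = ENNReal.ofReal (Real.exp (-u)) := by
                rw [← Real.enorm_eq_ofReal (Real.exp_nonneg _)]; rfl
            _ ≤ ENNReal.ofReal 1 := ENNReal.ofReal_le_ofReal this
            _ = 1 := ENNReal.ofReal_one
        · rw [hf]; simp [Set.indicator_of_notMem hu]
      calc ∫⁻ u, ‖f k u‖₊ ∂(volume.restrict (Ioi 0))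
          ≤ ∫⁻ u, (Ioc (0:ℝ) (p k * t)).indicator (fun _ => 1) u ∂(volume.restrict (Ioi 0)) :=
            lintegral_mono hptw
        _ ≤ ∫⁻ u, (Ioc (0:ℝ) (p k * t)).indicator (fun _ => 1) u := by
            exact lintegral_mono' Measure.restrict_le_self le_rfl
        _ = volume (Ioc (0:ℝ) (p k * t)) := by
            rw [lintegral_indicator measurableSet_Ioc]; simp
        _ = ENNReal.ofReal (p k * t) := by rw [Real.volume_Ioc, sub_zero]
    have h2 : ∑' k, ENNReal.ofReal (p k * t) = ENNReal.ofReal (∑' k, p k * t) :=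
      (ENNReal.ofReal_tsum_of_nonneg (fun k => mul_nonneg (hp0 k).le ht.le) (hp.mul_right t)).symm
    exact ne_top_of_le_ne_top (by rw [h2]; exact ENNReal.ofReal_ne_top)
      (ENNReal.tsum_le_tsum h1)
  have key := integral_tsum hmeas hbnd
  have hL : ∀ k, ∫ u in Ioi (0:ℝ), f k u = 1 - Real.exp (-(p k * t)) := by
    intro k
    have hpk : 0 < p k * t := mul_pos (hp0 k) ht
    rw [hf]
    rw [integral_indicator measurableSet_Ioc, Measure.restrict_restrict measurableSet_Ioc,
      Set.inter_eq_left.mpr Ioc_subset_Ioi_self]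
    rw [← intervalIntegral.integral_of_le hpk.le]
    rw [intervalIntegral.integral_comp_neg fun x => Real.exp x]
    rw [integral_exp]
    simp
  have hR : ∫ u in Ioi (0:ℝ), (∑' k, f k u) = ∫ u in Ioi (0:ℝ), Real.exp (-u) * N p (t / u) := by
    refine setIntegral_congr_fun measurableSet_Ioi fun u hu => ?_
    have hu0 : 0 < u := hu
    have hset : {j : ℕ | 1 / (t / u) ≤ p j} = {k : ℕ | u ∈ Ioc (0:ℝ) (p k * t)} := by
      ext j
      simp only [Set.mem_setOf_eq, Set.mem_Ioc, one_div_div]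
      rw [div_le_iff₀ ht]
      constructor
      · intro h; exact ⟨hu0, by linarith [h]⟩
      · intro h; linarith [h.2]
    have hfin : {k : ℕ | u ∈ Ioc (0:ℝ) (p k * t)}.Finite := by
      rw [← hset]; exact finite_set hp (by positivity)
    have hzero : ∀ k ∉ hfin.toFinset, f k u = 0 := by
      intro k hk
      rw [Set.Finite.mem_toFinset, Set.mem_setOf_eq] at hk
      rw [hf]; exact Set.indicator_of_notMem hk _
    rw [tsum_eq_sum hzero]
    have hval : ∀ k ∈ hfin.toFinset, f k u = Real.exp (-u) := by
      intro k hk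
      rw [Set.Finite.mem_toFinset, Set.mem_setOf_eq] at hk
      rw [hf]; exact Set.indicator_of_mem hk _
    rw [Finset.sum_congr rfl hval, Finset.sum_const, nsmul_eq_mul]
    rw [N, hset]
    rw [Nat.card_coe_set_eq, Set.ncard_eq_toFinset_card _ hfin]
    ring
  rw [← hR, key]
  exact tsum_congr fun k => (hL k).symm

/-- Potter-type bound from a doubling estimate, for monotone functions. -/
lemma potter {g : ℝ → ℝ} {α β : ℝ} (hαβ : α < β) (hβ0 : 0 ≤ β)
    (hmono : Monotone g) (hpos : ∀ᶠ t in atTop, 1 ≤ g t)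
    (h2 : Tendsto (fun t => g (t * 2) / g t) atTop (𝓝 ((2:ℝ) ^ α))) :
    ∃ t₀ : ℝ, 1 ≤ t₀ ∧ (∀ t, t₀ ≤ t → 1 ≤ g t) ∧
      ∀ t, t₀ ≤ t → ∀ x, 1 ≤ x → g (t * x) ≤ 2 ^ β * x ^ β * g t := by
  have h2β : (2:ℝ) ^ α < 2 ^ β := Real.rpow_lt_rpow_left_iff one_lt_two |>.mpr hαβ
  have hev : ∀ᶠ t in atTop, g (t * 2) / g t < 2 ^ β := h2.eventually_lt_const h2β
  obtain ⟨t₀, ht₀⟩ := eventually_atTop.mp ((hev.and hpos).and (eventually_ge_atTop 1))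
  refine ⟨max t₀ 1, le_max_right _ _, fun t ht => ((ht₀ t ((le_max_left _ _).trans ht)).1).2,
    fun t ht x hx => ?_⟩
  have hdbl : ∀ s, max t₀ 1 ≤ s → g (s * 2) ≤ 2 ^ β * g s := by
    intro s hs
    obtain ⟨⟨h1, h2'⟩, _⟩ := ht₀ s ((le_max_left _ _).trans hs)
    have hgs : 0 < g s := by linarith
    have := (div_lt_iff₀ hgs).mp h1
    linarith
  have hkey : ∀ n : ℕ, ∀ s, max t₀ 1 ≤ s → g (s * 2 ^ n) ≤ (2 ^ β) ^ n * g s := by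
    intro n
    induction n with
    | zero => intro s _; simp
    | succ n ih =>
      intro s hs
      have hs1 : (1:ℝ) ≤ s := (le_max_right _ _).trans hs
      have hs2 : max t₀ 1 ≤ s * 2 := by nlinarith
      have h1 : g (s * 2 ^ (n + 1)) = g ((s * 2) * 2 ^ n) := by ring_nf
      have h2' : g ((s * 2) * 2 ^ n) ≤ (2 ^ β) ^ n * g (s * 2) := ih (s * 2) hs2
      have h3 : g (s * 2) ≤ 2 ^ β * g s := hdbl s hs
      have h4 : (0:ℝ) ≤ (2 ^ β) ^ n := by positivity
      calc g (s * 2 ^ (n + 1)) = g ((s * 2) * 2 ^ n) := h1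
        _ ≤ (2 ^ β) ^ n * g (s * 2) := h2'
        _ ≤ (2 ^ β) ^ n * (2 ^ β * g s) := mul_le_mul_of_nonneg_left h3 h4
        _ = (2 ^ β) ^ (n + 1) * g s := by ring
  have hx0 : 0 < x := lt_of_lt_of_le one_pos hx
  have ht1 : (1:ℝ) ≤ t := (le_max_right _ _).trans ht
  set n := ⌈Real.logb 2 x⌉₊ with hn
  have hlogb : 0 ≤ Real.logb 2 x := Real.logb_nonneg one_lt_two hx
  have hxn : x ≤ 2 ^ n := by
    have h1 : x = (2:ℝ) ^ Real.logb 2 x := (Real.rpow_logb two_pos (by norm_num) hx0).symm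
    have h2' : (2:ℝ) ^ Real.logb 2 x ≤ (2:ℝ) ^ (n:ℝ) :=
      Real.rpow_le_rpow_of_exponent_le one_le_two (Nat.le_ceil _)
    rw [Real.rpow_natCast] at h2'
    linarith [h1 ▸ h2']
  have hgt : 0 ≤ g t := by
    have := ((ht₀ t ((le_max_left _ _).trans ht)).1).2; linarith
  have step1 : g (t * x) ≤ g (t * 2 ^ n) :=
    hmono (mul_le_mul_of_nonneg_left hxn (by linarith))
  have step2 : g (t * 2 ^ n) ≤ (2 ^ β) ^ n * g t := hkey n t ht
  have step3 : ((2:ℝ) ^ β) ^ n ≤ 2 ^ β * x ^ β := by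
    have e1 : ((2:ℝ) ^ β) ^ n = (2:ℝ) ^ (β * n) := by
      rw [Real.rpow_mul (by norm_num : (0:ℝ) ≤ 2), Real.rpow_natCast]
    have hne : (n:ℝ) ≤ Real.logb 2 x + 1 := by
      have := Nat.ceil_lt_add_one hlogb
      exact_mod_cast this.le
    have e2 : β * n ≤ β * (Real.logb 2 x + 1) := mul_le_mul_of_nonneg_left hne hβ0
    have e3 : (2:ℝ) ^ (β * n) ≤ (2:ℝ) ^ (β * (Real.logb 2 x + 1)) :=
      Real.rpow_le_rpow_of_exponent_le one_le_two e2
    have e4 : (2:ℝ) ^ (β * (Real.logb 2 x + 1)) = 2 ^ β * x ^ β := by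
      rw [mul_add, mul_one, Real.rpow_add two_pos,
        show β * Real.logb 2 x = Real.logb 2 x * β from mul_comm _ _,
        Real.rpow_mul (by norm_num : (0:ℝ) ≤ 2), Real.rpow_logb two_pos (by norm_num) hx0]
      ring
    rw [e1]; rw [e4] at e3; exact e3
  calc g (t * x) ≤ (2 ^ β) ^ n * g t := step1.trans step2
    _ ≤ 2 ^ β * x ^ β * g t := mul_le_mul_of_nonneg_right step3 hgt

end KarlinAux

open KarlinAux

/-- Karlin's asymptotic: if `ν t = #{j : p j ≥ 1/t}` is regularly varying, `ν t = t^α L t`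
with `α ∈ (0,1)` and `L` slowly varying, then `V t = ∑ₖ (1 - e^{-pₖ t})` satisfies
`V t ~ Γ(1-α) t^α L t` as `t → ∞`. -/
theorem karlin_V_asymptotics
    (p : ℕ → ℝ) (hp0 : ∀ k, 0 < p k) (hpmono : Antitone p) (hsum : ∑' k, p k = 1)
    (ν : ℝ → ℝ) (hν : ∀ t : ℝ, 0 < t → ν t = (Nat.card {j : ℕ | 1 / t ≤ p j} : ℝ))
    (α : ℝ) (hα0 : 0 < α) (hα1 : α < 1)
    (L : ℝ → ℝ)
    (hL : ∀ x : ℝ, 0 < x → Tendsto (fun t => L (t * x) / L t) atTop (𝓝 1))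
    (hreg : ∀ t : ℝ, 0 < t → ν t = t ^ α * L t)
    (V : ℝ → ℝ) (hV : ∀ t, V t = ∑' k, (1 - Real.exp (-(p k * t)))) :
    Tendsto (fun t => V t / (Real.Gamma (1 - α) * t ^ α * L t)) atTop (𝓝 1) := by
  have hps : Summable p := summable_aux hsum
  set β : ℝ := (α + 1) / 2 with hβ
  have hβα : α < β := by rw [hβ]; linarith
  have hβ1 : β < 1 := by rw [hβ]; linarith
  have hβ0 : 0 < β := by rw [hβ]; linarith
  have hmono : Monotone (N p) := N_mono hp0 hps
  set T : ℝ := max 1 (1 / p 0) with hT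
  have hNν : ∀ t : ℝ, 0 < t → ν t = N p t := fun t ht => hν t ht
  have hLpos : ∀ t : ℝ, T ≤ t → 0 < L t ∧ N p t = t ^ α * L t := by
    intro t ht
    have ht0 : 0 < t := lt_of_lt_of_le one_pos ((le_max_left _ _).trans ht)
    have hNt : N p t = t ^ α * L t := by rw [← hNν t ht0]; exact hreg t ht0
    have h1 : 1 ≤ N p t := N_pos hp0 hps ((le_max_right _ _).trans ht)
    have htα : (0:ℝ) < t ^ α := Real.rpow_pos_of_pos ht0 α
    have hLt : 0 < L t := by nlinarith [hNt ▸ h1]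
    exact ⟨hLt, hNt⟩
  have hratio : ∀ x : ℝ, 0 < x →
      Tendsto (fun t => N p (t * x) / N p t) atTop (𝓝 (x ^ α)) := by
    intro x hx
    have h1 : Tendsto (fun t => x ^ α * (L (t * x) / L t)) atTop (𝓝 (x ^ α * 1)) :=
      (hL x hx).const_mul _
    rw [mul_one] at h1
    refine h1.congr' ?_
    filter_upwards [eventually_ge_atTop T, eventually_ge_atTop (T / x)] with t ht ht'
    have ht0 : 0 < t := lt_of_lt_of_le one_pos ((le_max_left _ _).trans ht)
    obtain ⟨hLt, hNt⟩ := hLpos t ht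
    have htx : T ≤ t * x := (div_le_iff₀ hx).mp ht'
    obtain ⟨hLtx, hNtx⟩ := hLpos (t * x) htx
    have htα : (0:ℝ) < t ^ α := Real.rpow_pos_of_pos ht0 α
    rw [hNtx, hNt, Real.mul_rpow ht0.le hx.le]
    field_simp
  have hNev : ∀ᶠ t in atTop, 1 ≤ N p t :=
    (eventually_ge_atTop T).mono fun t ht => N_pos hp0 hps ((le_max_right _ _).trans ht)
  obtain ⟨t₀, ht₀1, ht₀pos, hpb⟩ := potter hβα hβ0.le hmono hNev (hratio 2 two_pos)
  have hGpos : 0 < Real.Gamma (1 - α) := Real.Gamma_pos_of_pos (by linarith)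
  have hconv : Tendsto (fun t => ∫ u in Ioi (0:ℝ), Real.exp (-u) * N p (t / u) / N p t)
      atTop (𝓝 (Real.Gamma (1 - α))) := by
    have hG : Real.Gamma (1 - α) = ∫ u in Ioi (0:ℝ), Real.exp (-u) * u ^ (-α) := by
      rw [Real.Gamma_eq_integral (by linarith : (0:ℝ) < 1 - α)]
      norm_num
    rw [hG]
    refine tendsto_integral_filter_of_dominated_convergence
      (fun u => Real.exp (-u) * (2 ^ β * u ^ (-β) + 1)) ?_ ?_ ?_ ?_
    · refine Eventually.of_forall fun t => ?_
      exact (((Real.measurable_exp.comp measurable_neg).mul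
        (hmono.measurable.comp (measurable_const.div measurable_id))).div_const
        (N p t)).aestronglyMeasurable
    · filter_upwards [eventually_ge_atTop t₀] with t ht
      rw [ae_restrict_iff' measurableSet_Ioi]
      refine Eventually.of_forall fun u hu => ?_
      have hu0 : 0 < u := hu
      have ht0 : 0 < t := lt_of_lt_of_le one_pos (ht₀1.trans ht)
      have hNt : 1 ≤ N p t := ht₀pos t ht
      have hNt0 : (0:ℝ) < N p t := by linarith
      have hNtu : 0 ≤ N p (t / u) := N_nonneg p _
      rw [Real.norm_eq_abs, abs_of_nonneg (by positivity)]
      have hc0 : (0:ℝ) ≤ 2 ^ β * u ^ (-β) := by positivity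
      rcases le_or_gt u 1 with h1 | h1
      · have hx : 1 ≤ 1 / u := one_le_one_div hu0 h1
        have hb := hpb t ht (1 / u) hx
        have harg : t / u = t * (1 / u) := by ring
        have hiu : (1 / u) ^ β = u ^ (-β) := by
          rw [one_div, Real.inv_rpow hu0.le, ← Real.rpow_neg hu0.le]
        have hub : N p (t / u) ≤ 2 ^ β * u ^ (-β) * N p t := by
          rw [harg]; rw [hiu] at hb; exact hb
        rw [div_le_iff₀ hNt0]
        have h2 : Real.exp (-u) * N p (t / u) ≤ Real.exp (-u) * (2 ^ β * u ^ (-β) * N p t) :=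
          mul_le_mul_of_nonneg_left hub (Real.exp_nonneg _)
        nlinarith [Real.exp_nonneg (-u), mul_nonneg (Real.exp_nonneg (-u)) hNt0.le]
      · have hmon : N p (t / u) ≤ N p t := hmono (div_le_self ht0.le h1.le)
        rw [div_le_iff₀ hNt0]
        have h2 : Real.exp (-u) * N p (t / u) ≤ Real.exp (-u) * N p t :=
          mul_le_mul_of_nonneg_left hmon (Real.exp_nonneg _)
        nlinarith [Real.exp_nonneg (-u), mul_nonneg (Real.exp_nonneg (-u)) hNt0.le,
          mul_nonneg (mul_nonneg (Real.exp_nonneg (-u)) hc0) hNt0.le]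
    · have h1 : IntegrableOn (fun u : ℝ => Real.exp (-u) * u ^ ((1 - β) - 1)) (Ioi (0:ℝ)) :=
        Real.GammaIntegral_convergent (by linarith)
      have h2 : IntegrableOn (fun u : ℝ => Real.exp (-(1 : ℝ) * u)) (Ioi (0:ℝ)) :=
        exp_neg_integrableOn_Ioi 0 one_pos
      have h3 := (h1.const_mul ((2:ℝ) ^ β)).add h2
      refine h3.congr (Eventually.of_forall fun u => ?_)
      simp only [Pi.add_apply]
      rw [show (1:ℝ) - β - 1 = -β from by ring, neg_one_mul]
      ring
    · rw [ae_restrict_iff' measurableSet_Ioi]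
      refine Eventually.of_forall fun u hu => ?_
      have hu0 : 0 < u := hu
      have h := (hratio (1 / u) (by positivity)).const_mul (Real.exp (-u))
      have hval : (1 / u) ^ α = u ^ (-α) := by
        rw [one_div, Real.inv_rpow hu0.le, ← Real.rpow_neg hu0.le]
      rw [hval] at h
      refine h.congr fun t => ?_
      rw [show t / u = t * (1 / u) from by ring, mul_div_assoc]
  have hVN : Tendsto (fun t => V t / N p t) atTop (𝓝 (Real.Gamma (1 - α))) := by
    refine hconv.congr' ?_
    filter_upwards [eventually_gt_atTop 0] with t ht
    rw [integral_div, ← V_eq hp0 hps hsum ht, ← hV t]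
  have hfinal : Tendsto (fun t => (V t / N p t) / Real.Gamma (1 - α)) atTop (𝓝 1) := by
    have h := hVN.div_const (Real.Gamma (1 - α))
    rw [div_self hGpos.ne'] at h
    exact h
  refine hfinal.congr' ?_
  filter_upwards [eventually_ge_atTop T] with t ht
  obtain ⟨hLt, hNt⟩ := hLpos t ht
  rw [div_div, mul_comm (N p t), mul_assoc, ← hNt]
end

section
/- Under the regular variation assumption ν(t) = t^α L(t) with α ∈ (0,1) and L slowly varying, for every γ ∈ (0,α) there exists a constant C_γ > 0 such that V(nt) ≤ C_γ t^γ n^α L(n) uniformly in t ∈ [0,1] and n ≥ 1 (with n ≥ 1/p_1), where V(t) = ∑_{k≥1}(1 - e^{-p_k t}). -/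
open Real Filter Topology

lemma karlin_finite (p : ℕ → ℝ) (hsum : Summable p) (c : ℝ) (hc : 0 < c) :
    {j : ℕ | c ≤ p j}.Finite := by
  have h0 : Tendsto p atTop (nhds 0) := hsum.tendsto_atTop_zero
  have : ∀ᶠ j in atTop, p j < c := h0.eventually_lt_const hc
  obtain ⟨N, hN⟩ := eventually_atTop.1 this
  refine (Set.finite_Iio N).subset fun j hj => ?_
  by_contra h
  exact absurd (hN j (not_lt.1 h)) (not_lt.2 hj.out)


/-- iterate upper doubling -/
lemma karlin_iter_up (f : ℝ → ℝ) (T : ℝ) (hT : 0 < T) (c : ℝ)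
    (hdouble : ∀ a, T ≤ a → f (2 * a) ≤ c * f a)
    (hcpos : 0 ≤ c) (hfnonneg : ∀ a, T ≤ a → 0 ≤ f a) :
    ∀ (m : ℕ) (a : ℝ), T ≤ a → f (2 ^ m * a) ≤ c ^ m * f a := by
  intro m
  induction m with
  | zero => intro a ha; simp
  | succ m ih =>
    intro a ha
    have h2m : T ≤ 2 ^ m * a := le_trans ha (le_mul_of_one_le_left (by linarith) (one_le_pow₀ (by norm_num)))
    calc f (2 ^ (m+1) * a) = f (2 * (2 ^ m * a)) := by ring_nf
      _ ≤ c * f (2 ^ m * a) := hdouble _ h2m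
      _ ≤ c * (c ^ m * f a) := by
          exact mul_le_mul_of_nonneg_left (ih a ha) hcpos
      _ = c ^ (m+1) * f a := by ring

/-- iterate lower doubling -/
lemma karlin_iter_down (f : ℝ → ℝ) (T : ℝ) (hT : 0 < T) (c : ℝ)
    (hdouble : ∀ a, T ≤ a → c * f a ≤ f (2 * a)) (hcpos : 0 ≤ c) :
    ∀ (m : ℕ) (a : ℝ), T ≤ a → c ^ m * f a ≤ f (2 ^ m * a) := by
  intro m
  induction m with
  | zero => intro a ha; simp
  | succ m ih =>
    intro a ha
    have h2m : T ≤ 2 ^ m * a := le_trans ha (le_mul_of_one_le_left (by linarith) (one_le_pow₀ (by norm_num)))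
    calc c ^ (m+1) * f a = c * (c ^ m * f a) := by ring
      _ ≤ c * f (2 ^ m * a) := mul_le_mul_of_nonneg_left (ih a ha) hcpos
      _ ≤ f (2 * (2 ^ m * a)) := hdouble _ h2m
      _ = f (2 ^ (m+1) * a) := by ring_nf

/-- Potter upper bound -/
lemma karlin_potter_up (f : ℝ → ℝ) (T : ℝ) (hT : 0 < T) (β : ℝ) (hβ : 0 ≤ β)
    (hmono : ∀ a b, T ≤ a → a ≤ b → f a ≤ f b)
    (hfnonneg : ∀ a, T ≤ a → 0 ≤ f a)
    (hdouble : ∀ a, T ≤ a → f (2 * a) ≤ 2 ^ β * f a) :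
    ∀ a, T ≤ a → ∀ l : ℝ, 1 ≤ l → f (l * a) ≤ (2 * l) ^ β * f a := by
  intro a ha l hl
  set m := ⌈Real.logb 2 l⌉₊ with hm
  have hl0 : (0:ℝ) < l := by linarith
  have hlogb : 0 ≤ Real.logb 2 l := Real.logb_nonneg one_lt_two hl
  have h1 : l ≤ 2 ^ m := by
    calc l = 2 ^ Real.logb 2 l := (Real.rpow_logb two_pos (by norm_num) hl0).symm
      _ ≤ 2 ^ (m : ℝ) := Real.rpow_le_rpow_of_exponent_le one_le_two (Nat.le_ceil _)
      _ = 2 ^ m := Real.rpow_natCast 2 m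
  have h2 : (2:ℝ) ^ m ≤ 2 * l := by
    calc (2:ℝ) ^ m = 2 ^ (m : ℝ) := (Real.rpow_natCast 2 m).symm
      _ ≤ 2 ^ (Real.logb 2 l + 1) := by
          apply Real.rpow_le_rpow_of_exponent_le one_le_two
          exact le_of_lt (Nat.ceil_lt_add_one hlogb)
      _ = 2 ^ Real.logb 2 l * 2 ^ (1:ℝ) := Real.rpow_add two_pos _ _
      _ = 2 * l := by rw [Real.rpow_logb two_pos (by norm_num) hl0, Real.rpow_one]; ring
  have key : f (2 ^ m * a) ≤ (2 ^ β) ^ m * f a :=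
    karlin_iter_up f T hT _ hdouble (le_of_lt (Real.rpow_pos_of_pos two_pos β)) hfnonneg m a ha
  have hla : T ≤ l * a := le_trans ha (le_mul_of_one_le_left (by linarith) hl)
  calc f (l * a) ≤ f (2 ^ m * a) := hmono _ _ hla (by nlinarith)
    _ ≤ (2 ^ β) ^ m * f a := key
    _ ≤ (2 * l) ^ β * f a := by
        apply mul_le_mul_of_nonneg_right _ (hfnonneg a ha)
        rw [← Real.rpow_natCast (2 ^ β) m, ← Real.rpow_mul (by norm_num), mul_comm β (m:ℝ),
          Real.rpow_mul (by norm_num : (0:ℝ) ≤ 2), Real.rpow_natCast]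
        exact Real.rpow_le_rpow (by positivity) h2 hβ

/-- Potter lower bound: for `T ≤ a ≤ b`, `f a ≤ (2a/b)^β f b`. -/
lemma karlin_potter_down (f : ℝ → ℝ) (T : ℝ) (hT : 0 < T) (β : ℝ) (hβ : 0 ≤ β)
    (hmono : ∀ a b, T ≤ a → a ≤ b → f a ≤ f b)
    (hfnonneg : ∀ a, T ≤ a → 0 ≤ f a)
    (hdouble : ∀ a, T ≤ a → 2 ^ β * f a ≤ f (2 * a)) :
    ∀ a b, T ≤ a → a ≤ b → f a ≤ (2 * a / b) ^ β * f b := by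
  intro a b ha hab
  have ha0 : (0:ℝ) < a := lt_of_lt_of_le hT ha
  have hb0 : (0:ℝ) < b := lt_of_lt_of_le ha0 hab
  set m := ⌊Real.logb 2 (b / a)⌋₊ with hm
  have hba1 : (1:ℝ) ≤ b / a := (one_le_div ha0).2 hab
  have hlogb : 0 ≤ Real.logb 2 (b / a) := Real.logb_nonneg one_lt_two hba1
  have h1 : (2:ℝ) ^ m ≤ b / a := by
    calc (2:ℝ) ^ m = 2 ^ (m:ℝ) := (Real.rpow_natCast 2 m).symm
      _ ≤ 2 ^ Real.logb 2 (b/a) := Real.rpow_le_rpow_of_exponent_le one_le_two (Nat.floor_le hlogb)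
      _ = b / a := Real.rpow_logb two_pos (by norm_num) (by positivity)
  have h2 : b / a ≤ 2 * 2 ^ m := by
    calc b / a = 2 ^ Real.logb 2 (b/a) := (Real.rpow_logb two_pos (by norm_num) (by positivity)).symm
      _ ≤ 2 ^ ((m:ℝ) + 1) := Real.rpow_le_rpow_of_exponent_le one_le_two
          (le_of_lt (Nat.lt_floor_add_one _))
      _ = 2 ^ (m:ℝ) * 2 ^ (1:ℝ) := Real.rpow_add two_pos _ _
      _ = 2 * 2 ^ m := by rw [Real.rpow_natCast, Real.rpow_one]; ring
  have key : (2 ^ β) ^ m * f a ≤ f (2 ^ m * a) :=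
    karlin_iter_down f T hT _ hdouble (le_of_lt (Real.rpow_pos_of_pos two_pos β)) m a ha
  have h3 : f (2 ^ m * a) ≤ f b := by
    apply hmono _ _ (le_trans ha (le_mul_of_one_le_left ha0.le (one_le_pow₀ (by norm_num))))
    rw [← le_div_iff₀ ha0]
    exact h1
  -- (b/(2a))^β ≤ (2^β)^m
  have h4 : (b / (2 * a)) ^ β ≤ (2 ^ β) ^ m := by
    rw [← Real.rpow_natCast (2 ^ β) m, ← Real.rpow_mul (by norm_num), mul_comm β (m:ℝ),
      Real.rpow_mul (by norm_num : (0:ℝ) ≤ 2), Real.rpow_natCast]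
    apply Real.rpow_le_rpow (by positivity) _ hβ
    rw [div_le_iff₀ (by positivity)]
    calc b = (b / a) * a := by field_simp
      _ ≤ (2 * 2 ^ m) * a := mul_le_mul_of_nonneg_right h2 ha0.le
      _ = 2 ^ m * (2 * a) := by ring
  have hpow_pos : (0:ℝ) < (b / (2 * a)) ^ β := Real.rpow_pos_of_pos (by positivity) β
  have h5 : (b / (2 * a)) ^ β * f a ≤ f b := by
    calc (b / (2 * a)) ^ β * f a ≤ (2 ^ β) ^ m * f a :=
          mul_le_mul_of_nonneg_right h4 (hfnonneg a ha)
      _ ≤ f (2 ^ m * a) := key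
      _ ≤ f b := h3
  have hinv : (2 * a / b) ^ β = ((b / (2 * a)) ^ β)⁻¹ := by
    rw [← Real.inv_rpow (by positivity : (0:ℝ) ≤ b / (2*a))]
    congr 1
    field_simp
  rw [hinv, ← div_eq_inv_mul, le_div_iff₀ hpow_pos, mul_comm]
  exact h5

lemma karlin_tail (p : ℕ → ℝ) (hp0 : ∀ k, 0 < p k) (hsum : Summable p)
    (u : ℝ) (hu : 0 < u) (g : ℕ → ℝ) (hgsum : Summable g)
    (hg : ∀ j : ℕ, (Nat.card {k : ℕ | u / 2 ^ (j+1) ≤ p k} : ℝ) * (u / 2 ^ j) ≤ g j) :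
    ∑' k, (if p k < u then p k else 0) ≤ ∑' j, g j := by
  classical
  set h : ℕ → ℕ → ℝ := fun j k => if u / 2 ^ (j+1) ≤ p k ∧ p k < u / 2 ^ j then p k else 0 with hh
  have hnn : ∀ j k, 0 ≤ h j k := by
    intro j k; simp only [hh]; split
    · exact (hp0 k).le
    · exact le_refl 0
  -- uniqueness of bands
  have huniq : ∀ k j j', h j k ≠ 0 → h j' k ≠ 0 → j = j' := by
    have aux : ∀ k j j', j < j' → h j k ≠ 0 → h j' k ≠ 0 → False := by
      intro k j j' hlt hj hj'
      simp only [hh, ne_eq, ite_eq_right_iff, not_forall] at hj hj'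
      obtain ⟨⟨hj1, hj2⟩, -⟩ := hj
      obtain ⟨⟨hj'1, hj'2⟩, -⟩ := hj'
      have : u / 2 ^ j' ≤ u / 2 ^ (j+1) := by
        apply div_le_div_of_nonneg_left hu.le (by positivity)
        exact pow_le_pow_right₀ (by norm_num) hlt
      linarith
    intro k j j' hj hj'
    rcases lt_trichotomy j j' with hl | he | hl
    · exact absurd (aux k j j' hl hj hj') (fun x => x)
    · exact he
    · exact absurd (aux k j' j hl hj' hj) (fun x => x)
  -- each k with p k < u lies in exactly one band
  have hband : ∀ k, p k < u → ∃ j₀, h j₀ k = p k := by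
    intro k hk
    have hex : ∃ j : ℕ, u / 2 ^ (j+1) ≤ p k := by
      obtain ⟨n, hn⟩ := pow_unbounded_of_one_lt (u / p k) (one_lt_two (α := ℝ))
      refine ⟨n, ?_⟩
      rw [div_le_iff₀ (by positivity)]
      rw [div_lt_iff₀ (hp0 k)] at hn
      have : (2:ℝ) ^ n ≤ 2 ^ (n+1) := by
        apply pow_le_pow_right₀ (by norm_num); omega
      nlinarith [hp0 k]
    set j₀ := Nat.find hex with hj₀
    refine ⟨j₀, ?_⟩
    have h1 : u / 2 ^ (j₀+1) ≤ p k := Nat.find_spec hex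
    have h2 : p k < u / 2 ^ j₀ := by
      rcases Nat.eq_zero_or_pos j₀ with h0 | hpos
      · rw [h0]; simpa using hk
      · obtain ⟨m, hm⟩ := Nat.exists_eq_add_of_lt hpos
        have := Nat.find_min hex (m := j₀ - 1) (by omega)
        push_neg at this
        have : u / 2 ^ j₀ > p k := by
          have he : j₀ - 1 + 1 = j₀ := by omega
          rwa [he] at this
        exact this
    simp only [hh]
    exact if_pos (And.intro h1 h2)
  -- pointwise identity : ∑' j, h j k = (if p k < u then p k else 0)
  have hfk : ∀ k, ∑' j, h j k = (if p k < u then p k else 0) := by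
    intro k
    by_cases hk : p k < u
    · obtain ⟨j₀, hj₀⟩ := hband k hk
      rw [if_pos hk, ← hj₀]
      apply tsum_eq_single
      intro j' hj'
      by_contra hne
      exact hj' (huniq k j' j₀ hne (by rw [hj₀]; exact (hp0 k).ne'))
    · rw [if_neg hk]
      have : ∀ j, h j k = 0 := by
        intro j
        simp only [hh, ite_eq_right_iff]
        rintro ⟨h1, h2⟩
        exfalso
        have : u / 2 ^ j ≤ u := by
          apply div_le_self hu.le (one_le_pow₀ (by norm_num))
        push_neg at hk
        linarith
      simp [this]
  -- summability of each fiber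
  have hfiber : ∀ k, Summable fun j => h j k := by
    intro k
    by_cases hk : ∃ j₀, h j₀ k ≠ 0
    · obtain ⟨j₀, hj₀⟩ := hk
      apply summable_of_ne_finset_zero (s := {j₀})
      intro j hj
      simp only [Finset.mem_singleton] at hj
      by_contra hne
      exact hj (huniq k j j₀ hne hj₀)
    · push_neg at hk
      apply summable_of_ne_finset_zero (s := ∅)
      intro j _; exact hk j
  -- summability of (if p k < u then p k else 0)
  have hfsum : Summable fun k => (if p k < u then p k else 0 : ℝ) := by
    apply Summable.of_nonneg_of_le (fun k => ?_) (fun k => ?_) hsum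
    · split; exacts [(hp0 k).le, le_refl 0]
    · split; exacts [le_refl _, (hp0 k).le]
  -- summability of uncurried double family F (k,j) = h j k
  have hF : Summable (Function.uncurry (fun k j => h j k)) :=
    (summable_prod_of_nonneg (fun q => hnn q.2 q.1)).2
      ⟨fun k => hfiber k, Summable.congr hfsum fun k => (hfk k).symm⟩
  -- per-band bound : ∑' k, h j k ≤ g j
  have hcount : ∀ j : ℕ, ∑' k, h j k ≤ g j := by
    intro j
    have hfin : {k : ℕ | u / 2 ^ (j+1) ≤ p k}.Finite :=
      karlin_finite p hsum _ (by positivity)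
    have hzero : ∀ k ∉ hfin.toFinset, h j k = 0 := by
      intro k hk
      simp only [Set.Finite.mem_toFinset, Set.mem_setOf_eq] at hk
      simp only [hh, ite_eq_right_iff]
      rintro ⟨h1, -⟩; exact absurd h1 hk
    rw [tsum_eq_sum hzero]
    calc ∑ k ∈ hfin.toFinset, h j k ≤ ∑ k ∈ hfin.toFinset, (u / 2 ^ j) := by
          apply Finset.sum_le_sum
          intro k _
          simp only [hh]; split
          · rename_i hc; exact hc.2.le
          · positivity
      _ = hfin.toFinset.card * (u / 2 ^ j) := by
          rw [Finset.sum_const, nsmul_eq_mul]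
      _ = (Nat.card {k : ℕ | u / 2 ^ (j+1) ≤ p k} : ℝ) * (u / 2 ^ j) := by
          congr 2
          rw [Nat.card_coe_set_eq, Set.ncard_eq_toFinset_card _ hfin]
      _ ≤ g j := hg j
  -- put it together
  calc ∑' k, (if p k < u then p k else 0)
      = ∑' (k) (j), h j k := by
        apply tsum_congr; intro k; exact (hfk k).symm
    _ = ∑' (j) (k), h j k := (Summable.tsum_comm hF).symm
    _ ≤ ∑' j, g j := by
        apply Summable.tsum_le_tsum hcount _ hgsum
        apply Summable.of_nonneg_of_le (fun j => tsum_nonneg (fun k => hnn j k)) hcount hgsum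

set_option maxHeartbeats 3000000 in
/-- Under the regular variation assumption `ν t = t^α L t` with `α ∈ (0,1)` and `L` slowly
varying, for every `γ ∈ (0,α)` there is `C_γ > 0` such that `V (n t) ≤ C_γ t^γ n^α L n`
uniformly in `t ∈ [0,1]` and `n ≥ 1/p₁`, where `V t = ∑ₖ (1 - e^{-pₖ t})`. -/
theorem karlin_V_uniform_bound
    (p : ℕ → ℝ) (hp0 : ∀ k, 0 < p k) (hpmono : Antitone p) (hsum : ∑' k, p k = 1)
    (ν : ℝ → ℝ) (hν : ∀ t : ℝ, 0 < t → ν t = (Nat.card {j : ℕ | 1 / t ≤ p j} : ℝ))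
    (α : ℝ) (hα0 : 0 < α) (hα1 : α < 1)
    (L : ℝ → ℝ)
    (hL : ∀ x : ℝ, 0 < x → Tendsto (fun t => L (t * x) / L t) atTop (𝓝 1))
    (hreg : ∀ t : ℝ, 0 < t → ν t = t ^ α * L t)
    (V : ℝ → ℝ) (hV : ∀ t, V t = ∑' k, (1 - Real.exp (-(p k * t))))
    (γ : ℝ) (hγ0 : 0 < γ) (hγα : γ < α) :
    ∃ C : ℝ, 0 < C ∧ ∀ (n : ℕ), 1 / p 0 ≤ (n : ℝ) → ∀ t ∈ Set.Icc (0 : ℝ) 1,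
      V ((n : ℝ) * t) ≤ C * t ^ γ * (n : ℝ) ^ α * L n := by
  classical
  -- summability of p
  have hpsum : Summable p := by
    by_contra h
    rw [tsum_eq_zero_of_not_summable h] at hsum
    norm_num at hsum
  have hp00 : 0 < p 0 := hp0 0
  -- basic ν facts
  have νnonneg : ∀ t : ℝ, 0 < t → 0 ≤ ν t := by
    intro t ht; rw [hν t ht]; positivity
  have νmono : ∀ a b : ℝ, 0 < a → a ≤ b → ν a ≤ ν b := by
    intro a b ha hab
    have hb : 0 < b := lt_of_lt_of_le ha hab
    rw [hν a ha, hν b hb]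
    have hfin : {j : ℕ | 1 / b ≤ p j}.Finite := karlin_finite p hpsum _ (by positivity)
    exact_mod_cast Nat.card_mono hfin
      (fun j hj => le_trans (by apply one_div_le_one_div_of_le ha hab) hj.out)
  have νone : ∀ t : ℝ, 1 / p 0 ≤ t → 1 ≤ ν t := by
    intro t ht
    have ht0 : 0 < t := lt_of_lt_of_le (by positivity) ht
    rw [hν t ht0]
    have hmem : (0:ℕ) ∈ {j : ℕ | 1 / t ≤ p j} := by
      simp only [Set.mem_setOf_eq]
      rw [div_le_iff₀ hp00] at ht
      rw [div_le_iff₀ ht0]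
      nlinarith
    have hfin : {j : ℕ | 1 / t ≤ p j}.Finite := karlin_finite p hpsum _ (by positivity)
    have : 0 < Nat.card {j : ℕ | 1 / t ≤ p j} := by
      have := hfin.to_subtype
      have := Set.nonempty_of_mem hmem
      have := this.to_subtype
      exact Nat.card_pos
    exact_mod_cast this
  -- choose ε
  set ε : ℝ := min (α - γ) ((1 - α)/2) with hε
  have hε0 : 0 < ε := lt_min (by linarith) (by linarith)
  have hαε1 : α + ε < 1 := by
    have : ε ≤ (1 - α)/2 := min_le_right _ _
    linarith
  have hγαε : γ ≤ α - ε := by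
    have : ε ≤ α - γ := min_le_left _ _
    linarith
  have hαε0 : 0 < α - ε := lt_of_lt_of_le hγ0 hγαε
  -- doubling ratio tendsto
  set M : ℝ := max 1 (1 / p 0) with hM
  have hM0 : (0:ℝ) < M := lt_of_lt_of_le one_pos (le_max_left _ _)
  have hMp : 1 / p 0 ≤ M := le_max_right _ _
  have hLpos : ∀ t : ℝ, M ≤ t → 0 < L t := by
    intro t ht
    have ht0 : 0 < t := lt_of_lt_of_le hM0 ht
    have h1 : 1 ≤ ν t := νone t (le_trans hMp ht)
    have h2 := hreg t ht0
    have htα : 0 < t ^ α := Real.rpow_pos_of_pos ht0 α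
    nlinarith [Real.rpow_nonneg ht0.le α]
  have hratio : Tendsto (fun t : ℝ => ν (2 * t) / ν t) atTop (𝓝 ((2:ℝ) ^ α)) := by
    have heq : (fun t : ℝ => (2:ℝ) ^ α * (L (t * 2) / L t)) =ᶠ[atTop]
        (fun t : ℝ => ν (2 * t) / ν t) := by
      filter_upwards [eventually_ge_atTop M] with t ht
      have ht0 : 0 < t := lt_of_lt_of_le hM0 ht
      have hLt : 0 < L t := hLpos t ht
      rw [hreg t ht0, hreg (2*t) (by linarith),
        Real.mul_rpow (by norm_num) ht0.le, show t * 2 = 2 * t by ring]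
      field_simp
    have := ((hL 2 two_pos).const_mul ((2:ℝ) ^ α)).congr' heq
    simpa using this
  have hlohi : (2:ℝ) ^ (α - ε) < 2 ^ α ∧ (2:ℝ) ^ α < 2 ^ (α + ε) := by
    constructor <;> exact Real.rpow_lt_rpow_left_iff one_lt_two |>.2 (by linarith)
  obtain ⟨T₀, hT₀⟩ := eventually_atTop.1
    (hratio.eventually (Ioo_mem_nhds hlohi.1 hlohi.2))
  set T : ℝ := max T₀ M with hT
  have hTM : M ≤ T := le_max_right _ _
  have hT0 : 0 < T := lt_of_lt_of_le hM0 hTM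
  have hT1 : 1 ≤ T := le_trans (le_max_left _ _) hTM
  have hTp : 1 / p 0 ≤ T := le_trans hMp hTM
  have hνTpos : ∀ a : ℝ, T ≤ a → 0 < ν a :=
    fun a ha => lt_of_lt_of_le one_pos (νone a (le_trans hTp ha))
  have hdoub_up : ∀ a : ℝ, T ≤ a → ν (2 * a) ≤ 2 ^ (α + ε) * ν a := by
    intro a ha
    have h := (hT₀ a (le_trans (le_max_left _ _) ha)).2
    have hνa := hνTpos a ha
    rw [div_lt_iff₀ hνa] at h
    linarith
  have hdoub_lo : ∀ a : ℝ, T ≤ a → 2 ^ (α - ε) * ν a ≤ ν (2 * a) := by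
    intro a ha
    have h := (hT₀ a (le_trans (le_max_left _ _) ha)).1
    have hνa := hνTpos a ha
    rw [lt_div_iff₀ hνa] at h
    linarith
  have hmono' : ∀ a b : ℝ, T ≤ a → a ≤ b → ν a ≤ ν b :=
    fun a b ha hab => νmono a b (lt_of_lt_of_le hT0 ha) hab
  have hnonneg' : ∀ a : ℝ, T ≤ a → 0 ≤ ν a := fun a ha => (hνTpos a ha).le
  have hPup : ∀ a, T ≤ a → ∀ l : ℝ, 1 ≤ l → ν (l * a) ≤ (2 * l) ^ (α + ε) * ν a :=
    karlin_potter_up ν T hT0 (α + ε) (by linarith) hmono' hnonneg' hdoub_up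
  have hPdown : ∀ a b, T ≤ a → a ≤ b → ν a ≤ (2 * a / b) ^ (α - ε) * ν b :=
    karlin_potter_down ν T hT0 (α - ε) hαε0.le hmono' hnonneg' hdoub_lo
  -- geometric constants
  set r : ℝ := 2 ^ (α + ε - 1) with hr
  have hr0 : 0 < r := Real.rpow_pos_of_pos two_pos _
  have hr1 : r < 1 := Real.rpow_lt_one_of_one_lt_of_neg one_lt_two (by linarith)
  set K₁ : ℝ := (4:ℝ) ^ (α + ε) * (1 - r)⁻¹ with hK₁
  have hK₁0 : 0 ≤ K₁ := by
    apply mul_nonneg (Real.rpow_nonneg (by norm_num) _)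
    rw [inv_nonneg]; linarith
  -- key claim : V s ≤ (1 + K₁) * ν s for s ≥ T
  have hVclaim : ∀ s : ℝ, T ≤ s → V s ≤ (1 + K₁) * ν s := by
    intro s hs
    have hs0 : 0 < s := lt_of_lt_of_le hT0 hs
    set u : ℝ := 1 / s with hu
    have hu0 : 0 < u := by positivity
    -- geometric majorant
    set g : ℕ → ℝ := fun j => (ν s * u * 4 ^ (α + ε)) * r ^ j with hg
    have hgsum : Summable g := (summable_geometric_of_lt_one hr0.le hr1).mul_left _
    have htsumg : ∑' j, g j = ν s * u * K₁ := by
      rw [hg, tsum_mul_left, tsum_geometric_of_lt_one hr0.le hr1, hK₁]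
      ring
    -- verify the band counting bound
    have hgbound : ∀ j : ℕ,
        (Nat.card {k : ℕ | u / 2 ^ (j+1) ≤ p k} : ℝ) * (u / 2 ^ j) ≤ g j := by
      intro j
      have h2j : (0:ℝ) < 2 ^ (j+1) := by positivity
      have hteq : u / 2 ^ (j+1) = 1 / (2 ^ (j+1) * s) := by
        rw [hu, div_div, mul_comm]
      have hcard : (Nat.card {k : ℕ | u / 2 ^ (j+1) ≤ p k} : ℝ) = ν (2 ^ (j+1) * s) := by
        rw [hteq, hν (2 ^ (j+1) * s) (by positivity)]
      have hl1 : (1:ℝ) ≤ 2 ^ (j+1) := one_le_pow₀ (by norm_num)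
      have hpot := hPup s hs (2 ^ (j+1)) hl1
      have harith : ((2:ℝ) * 2 ^ (j+1)) ^ (α + ε) * (u / 2 ^ j) = u * 4 ^ (α + ε) * r ^ j := by
        have h1 : (2:ℝ) * 2 ^ (j+1) = 4 * 2 ^ j := by ring
        rw [h1, Real.mul_rpow (by norm_num) (by positivity)]
        have h2 : ((2:ℝ) ^ j) ^ (α + ε) / 2 ^ j = r ^ j := by
          rw [← Real.rpow_natCast (2:ℝ) j, ← Real.rpow_mul (by norm_num : (0:ℝ) ≤ 2),
            ← Real.rpow_natCast r j, hr, ← Real.rpow_mul (by norm_num : (0:ℝ) ≤ 2),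
            ← Real.rpow_sub two_pos]
          congr 1; ring
        calc (4:ℝ) ^ (α+ε) * (2 ^ j) ^ (α+ε) * (u / 2 ^ j)
            = u * 4 ^ (α+ε) * ((2 ^ j) ^ (α+ε) / 2 ^ j) := by ring
          _ = u * 4 ^ (α+ε) * r ^ j := by rw [h2]
      calc (Nat.card {k : ℕ | u / 2 ^ (j+1) ≤ p k} : ℝ) * (u / 2 ^ j)
          = ν (2 ^ (j+1) * s) * (u / 2 ^ j) := by rw [hcard]
        _ ≤ ((2:ℝ) * 2 ^ (j+1)) ^ (α + ε) * ν s * (u / 2 ^ j) := by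
            apply mul_le_mul_of_nonneg_right hpot (by positivity)
        _ = ν s * (((2:ℝ) * 2 ^ (j+1)) ^ (α + ε) * (u / 2 ^ j)) := by ring
        _ = g j := by rw [harith, hg]; ring
    have htail := karlin_tail p hp0 hpsum u hu0 g hgsum hgbound
    rw [htsumg] at htail
    -- split V
    have hterm : ∀ k, 1 - Real.exp (-(p k * s)) ≤
        (if u ≤ p k then (1:ℝ) else 0) + s * (if p k < u then p k else 0) := by
      intro k
      by_cases hk : u ≤ p k
      · rw [if_pos hk, if_neg (not_lt.2 hk)]
        have := Real.exp_pos (-(p k * s))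
        simp only [mul_zero]
        linarith
      · rw [if_neg hk, if_pos (not_le.1 hk)]
        have h1 : 1 - (p k * s) ≤ Real.exp (-(p k * s)) := by
          have := Real.add_one_le_exp (-(p k * s))
          linarith
        have : 1 - Real.exp (-(p k * s)) ≤ p k * s := by linarith
        linarith [this]
    have hVsummand : Summable fun k => 1 - Real.exp (-(p k * s)) := by
      apply Summable.of_nonneg_of_le (fun k => ?_) (fun k => ?_) (hpsum.mul_right s)
      · have : Real.exp (-(p k * s)) ≤ 1 := by
          rw [Real.exp_le_one_iff]
          have := hp0 k; nlinarith
        linarith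
      · have h1 : 1 - (p k * s) ≤ Real.exp (-(p k * s)) := by
          have := Real.add_one_le_exp (-(p k * s))
          linarith
        linarith
    have hfinS : {k : ℕ | u ≤ p k}.Finite := karlin_finite p hpsum u hu0
    have hindsum : Summable fun k => (if u ≤ p k then (1:ℝ) else 0) := by
      apply summable_of_ne_finset_zero (s := hfinS.toFinset)
      intro k hk
      simp only [Set.Finite.mem_toFinset, Set.mem_setOf_eq] at hk
      rw [if_neg hk]
    have htailsum : Summable fun k => (if p k < u then p k else 0 : ℝ) := by
      apply Summable.of_nonneg_of_le (fun k => ?_) (fun k => ?_) hpsum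
      · split; exacts [(hp0 k).le, le_refl 0]
      · split; exacts [le_refl _, (hp0 k).le]
    have hindval : ∑' k, (if u ≤ p k then (1:ℝ) else 0) = ν s := by
      have hzero : ∀ k ∉ hfinS.toFinset, (if u ≤ p k then (1:ℝ) else 0) = 0 := by
        intro k hk
        simp only [Set.Finite.mem_toFinset, Set.mem_setOf_eq] at hk
        rw [if_neg hk]
      rw [tsum_eq_sum hzero]
      have : ∀ k ∈ hfinS.toFinset, (if u ≤ p k then (1:ℝ) else 0) = 1 := by
        intro k hk
        simp only [Set.Finite.mem_toFinset, Set.mem_setOf_eq] at hk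
        rw [if_pos hk]
      rw [Finset.sum_congr rfl this, Finset.sum_const, nsmul_eq_mul, mul_one,
        hν s hs0]
      congr 1
      rw [Nat.card_coe_set_eq, Set.ncard_eq_toFinset_card _ hfinS]
    calc V s = ∑' k, (1 - Real.exp (-(p k * s))) := hV s
      _ ≤ ∑' k, ((if u ≤ p k then (1:ℝ) else 0) + s * (if p k < u then p k else 0)) := by
          apply Summable.tsum_le_tsum hterm hVsummand
          exact hindsum.add (htailsum.mul_left s)
      _ = ν s + s * ∑' k, (if p k < u then p k else 0) := by
          rw [Summable.tsum_add hindsum (htailsum.mul_left s), hindval, tsum_mul_left]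
      _ ≤ ν s + s * (ν s * u * K₁) := by
          have := mul_le_mul_of_nonneg_left htail hs0.le
          linarith
      _ = (1 + K₁) * ν s := by
          have hsu : s * u = 1 := by rw [hu]; field_simp
          calc ν s + s * (ν s * u * K₁) = ν s + (s * u) * (ν s * K₁) := by ring
            _ = (1 + K₁) * ν s := by rw [hsu]; ring
  -- lower bound for ν
  have hlow : ∀ b : ℝ, T ≤ b → (b / (2 * T)) ^ (α - ε) ≤ ν b := by
    intro b hb
    have hb0 : 0 < b := lt_of_lt_of_le hT0 hb
    have h1 := hPdown T b le_rfl hb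
    have h2 : 1 ≤ (2 * T / b) ^ (α - ε) * ν b := le_trans (νone T hTp) h1
    have hx0 : (0:ℝ) < 2 * T / b := by positivity
    have hpos : (0:ℝ) < (2 * T / b) ^ (α - ε) := Real.rpow_pos_of_pos hx0 _
    have hinv : (b / (2 * T)) ^ (α - ε) = ((2 * T / b) ^ (α - ε))⁻¹ := by
      rw [← Real.inv_rpow hx0.le]
      congr 1
      field_simp
    rw [hinv]
    calc ((2 * T / b) ^ (α - ε))⁻¹ = ((2 * T / b) ^ (α - ε))⁻¹ * 1 := (mul_one _).symm
      _ ≤ ((2 * T / b) ^ (α - ε))⁻¹ * ((2 * T / b) ^ (α - ε) * ν b) :=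
          mul_le_mul_of_nonneg_left h2 (by positivity)
      _ = ν b := by field_simp
  -- trivial bound V s ≤ s
  have hVtriv : ∀ s : ℝ, 0 ≤ s → V s ≤ s := by
    intro s hs
    have hVsummand : Summable fun k => 1 - Real.exp (-(p k * s)) := by
      apply Summable.of_nonneg_of_le (fun k => ?_) (fun k => ?_) (hpsum.mul_right s)
      · have : Real.exp (-(p k * s)) ≤ 1 := by
          rw [Real.exp_le_one_iff]
          have := hp0 k; nlinarith
        linarith
      · have := Real.add_one_le_exp (-(p k * s))
        linarith
    calc V s = ∑' k, (1 - Real.exp (-(p k * s))) := hV s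
      _ ≤ ∑' k, p k * s := by
          apply Summable.tsum_le_tsum (fun k => ?_) hVsummand (hpsum.mul_right s)
          have := Real.add_one_le_exp (-(p k * s))
          linarith
      _ = (∑' k, p k) * s := tsum_mul_right
      _ = s := by rw [hsum, one_mul]
  -- the constant
  set C : ℝ := T + T ^ (1 - γ) * (2 * T) ^ (α - ε) + (1 + K₁) * 2 + 1 with hC
  have hC2 : (1 + K₁) * 2 ≤ C := by
    have h1 : 0 ≤ T ^ (1 - γ) * (2 * T) ^ (α - ε) :=
      mul_nonneg (Real.rpow_nonneg hT0.le _) (Real.rpow_nonneg (by linarith) _)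
    rw [hC]; linarith
  have hCT : T ≤ C := by
    have h1 : 0 ≤ T ^ (1 - γ) * (2 * T) ^ (α - ε) :=
      mul_nonneg (Real.rpow_nonneg hT0.le _) (Real.rpow_nonneg (by linarith) _)
    rw [hC]; nlinarith
  have hCB : T ^ (1 - γ) * (2 * T) ^ (α - ε) ≤ C := by
    rw [hC]; nlinarith
  have hC0 : 0 < C := lt_of_lt_of_le hT0 hCT
  refine ⟨C, hC0, ?_⟩
  intro n hn t ht
  obtain ⟨ht0, ht1⟩ := ht
  have hn0 : (0:ℝ) < n := lt_of_lt_of_le (by positivity) hn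
  have hνn0 : 0 ≤ ν n := νnonneg n hn0
  have hνn1 : 1 ≤ ν n := νone n hn
  have hkey : V ((n:ℝ) * t) ≤ C * (t ^ γ * ν n) := by
    rcases eq_or_lt_of_le ht0 with ht0' | ht0'
    · -- t = 0
      subst ht0'
      have hV0 : V ((n:ℝ) * 0) = 0 := by
        rw [hV]
        simp
      rw [hV0, Real.zero_rpow hγ0.ne', zero_mul, mul_zero]
    · -- t > 0
      have htγ1 : t ≤ t ^ γ := by
        nth_rewrite 1 [← Real.rpow_one t]
        exact Real.rpow_le_rpow_of_exponent_ge ht0' ht1 (by linarith)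
      have htγ0 : 0 < t ^ γ := Real.rpow_pos_of_pos ht0' γ
      rcases lt_or_ge (n:ℝ) T with hnT | hnT
      · -- small n
        calc V ((n:ℝ) * t) ≤ (n:ℝ) * t := hVtriv _ (by positivity)
          _ ≤ T * t := by nlinarith
          _ ≤ T * t ^ γ := by nlinarith
          _ ≤ C * (t ^ γ * ν n) := by
              have e1 : T * t ^ γ ≤ C * t ^ γ := mul_le_mul_of_nonneg_right hCT htγ0.le
              have e2 : C * t ^ γ * 1 ≤ C * t ^ γ * ν n :=
                mul_le_mul_of_nonneg_left hνn1 (by positivity)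
              nlinarith [e1, e2]
      · -- n ≥ T
        rcases lt_or_ge ((n:ℝ) * t) T with hsT | hsT
        · -- n*t < T : use trivial bound
          have hstep : (n:ℝ) * t ≤ T ^ (1 - γ) * (2 * T) ^ (α - ε) * (t ^ γ * ν n) := by
            have e1 : (n:ℝ) * t = (n:ℝ) * t ^ γ * t ^ (1 - γ) := by
              rw [mul_assoc, ← Real.rpow_add ht0']
              norm_num
            have e2 : t ^ (1 - γ) ≤ (T / n) ^ (1 - γ) := by
              apply Real.rpow_le_rpow ht0'.le _ (by linarith)
              rw [le_div_iff₀ hn0]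
              nlinarith
            have e3 : (T / n) ^ (1 - γ) = T ^ (1 - γ) / (n:ℝ) ^ (1 - γ) :=
              Real.div_rpow hT0.le hn0.le _
            have e4 : (n:ℝ) / (n:ℝ) ^ (1 - γ) = (n:ℝ) ^ γ := by
              nth_rewrite 1 [← Real.rpow_one (n:ℝ)]
              rw [← Real.rpow_sub hn0]
              norm_num
            have e5 : (n:ℝ) ^ γ ≤ (n:ℝ) ^ (α - ε) :=
              Real.rpow_le_rpow_of_exponent_le (le_trans hT1 hnT) hγαε
            have e6 : (n:ℝ) ^ (α - ε) ≤ (2 * T) ^ (α - ε) * ν n := by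
              have h1 := hlow n hnT
              have h2 : ((n:ℝ) / (2 * T)) ^ (α - ε) = (n:ℝ) ^ (α - ε) / (2 * T) ^ (α - ε) :=
                Real.div_rpow hn0.le (by linarith) _
              rw [h2] at h1
              have h3 : (0:ℝ) < (2 * T) ^ (α - ε) := Real.rpow_pos_of_pos (by linarith) _
              rw [div_le_iff₀ h3] at h1
              linarith [h1]
            have hn1γ : (0:ℝ) < (n:ℝ) ^ (1 - γ) := Real.rpow_pos_of_pos hn0 _
            calc (n:ℝ) * t = (n:ℝ) * t ^ γ * t ^ (1 - γ) := e1
              _ ≤ (n:ℝ) * t ^ γ * (T / n) ^ (1 - γ) := by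
                  apply mul_le_mul_of_nonneg_left e2 (by positivity)
              _ = t ^ γ * (T ^ (1 - γ) * ((n:ℝ) / (n:ℝ) ^ (1 - γ))) := by
                  rw [e3]; ring
              _ = t ^ γ * (T ^ (1 - γ) * (n:ℝ) ^ γ) := by rw [e4]
              _ ≤ t ^ γ * (T ^ (1 - γ) * ((n:ℝ) ^ (α - ε))) := by
                  apply mul_le_mul_of_nonneg_left _ htγ0.le
                  exact mul_le_mul_of_nonneg_left e5 (Real.rpow_nonneg hT0.le _)
              _ ≤ t ^ γ * (T ^ (1 - γ) * ((2 * T) ^ (α - ε) * ν n)) := by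
                  apply mul_le_mul_of_nonneg_left _ htγ0.le
                  exact mul_le_mul_of_nonneg_left e6 (Real.rpow_nonneg hT0.le _)
              _ = T ^ (1 - γ) * (2 * T) ^ (α - ε) * (t ^ γ * ν n) := by ring
          calc V ((n:ℝ) * t) ≤ (n:ℝ) * t := hVtriv _ (by positivity)
            _ ≤ T ^ (1 - γ) * (2 * T) ^ (α - ε) * (t ^ γ * ν n) := hstep
            _ ≤ C * (t ^ γ * ν n) := by
                apply mul_le_mul_of_nonneg_right hCB (mul_nonneg htγ0.le hνn0)
        · -- n*t ≥ T : use the main claim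
          have h1 : V ((n:ℝ) * t) ≤ (1 + K₁) * ν ((n:ℝ) * t) := hVclaim _ hsT
          have h2 : ν ((n:ℝ) * t) ≤ (2 * ((n:ℝ) * t) / n) ^ (α - ε) * ν n := by
            apply hPdown _ _ hsT
            nlinarith
          have h3 : (2 * ((n:ℝ) * t) / n : ℝ) = 2 * t := by field_simp
          have h4 : ((2:ℝ) * t) ^ (α - ε) ≤ 2 * t ^ γ := by
            rw [Real.mul_rpow (by norm_num) ht0'.le]
            have h5 : (2:ℝ) ^ (α - ε) ≤ 2 := by
              nth_rewrite 2 [← Real.rpow_one (2:ℝ)]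
              exact Real.rpow_le_rpow_of_exponent_le one_le_two (by linarith)
            have h6 : t ^ (α - ε) ≤ t ^ γ :=
              Real.rpow_le_rpow_of_exponent_ge ht0' ht1 hγαε
            have h7 : 0 ≤ t ^ (α - ε) := Real.rpow_nonneg ht0'.le _
            nlinarith [Real.rpow_nonneg (le_of_lt ht0') γ]
          have hνnt0 : 0 ≤ ν ((n:ℝ) * t) := νnonneg _ (by positivity)
          calc V ((n:ℝ) * t) ≤ (1 + K₁) * ν ((n:ℝ) * t) := h1
            _ ≤ (1 + K₁) * ((2 * ((n:ℝ) * t) / n) ^ (α - ε) * ν n) := by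
                apply mul_le_mul_of_nonneg_left h2 (by linarith)
            _ = (1 + K₁) * ((2 * t) ^ (α - ε) * ν n) := by rw [h3]
            _ ≤ (1 + K₁) * (2 * t ^ γ * ν n) := by
                apply mul_le_mul_of_nonneg_left _ (by linarith)
                exact mul_le_mul_of_nonneg_right h4 hνn0
            _ = (1 + K₁) * 2 * (t ^ γ * ν n) := by ring
            _ ≤ C * (t ^ γ * ν n) := by
                apply mul_le_mul_of_nonneg_right hC2 (mul_nonneg htγ0.le hνn0)
  calc V ((n:ℝ) * t) ≤ C * (t ^ γ * ν n) := hkey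
    _ = C * t ^ γ * ((n:ℝ) ^ α * L n) := by rw [hreg n hn0]; ring
    _ = C * t ^ γ * (n:ℝ) ^ α * L n := by ring
end

section
/- Let N be a Poisson process with rate 1, N_k(t) = ∑_{ℓ≤N(t)} 1_{Y_ℓ = k} the thinned processes (rates p_k, ∑ p_k = 1), ε ∈ {-1,1}^ℕ fixed, and \tilde U_1^ε(t) = ∑_k ε_k(1_{N_k(t) odd} - q̃_k(t)) with q̃_k(t) = (1-e^{-2p_k t})/2. Then for all t ≤ s ≤ t + δ, almost surely |\tilde U_1^ε(s) - \tilde U_1^ε(t)| ≤ N(t+δ) - N(t) + δ. -/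
open Real MeasureTheory ProbabilityTheory

lemma aux_sum_nat {f : ℕ → ℕ} {m : ℕ} (h : ∑' k, (f k : ENNReal) = (m : ENNReal)) :
    Summable (fun k => (f k : ℝ)) ∧ ∑' k, (f k : ℝ) = m := by
  have hne : ∑' k, (f k : ENNReal) ≠ ⊤ := by rw [h]; exact ENNReal.natCast_ne_top m
  have hs := ENNReal.summable_toReal hne
  simp only [ENNReal.toReal_natCast] at hs
  refine ⟨hs, ?_⟩
  have := ENNReal.tsum_toReal_eq (f := fun k => (f k : ENNReal)) (fun a => ENNReal.natCast_ne_top _)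
  simp only [ENNReal.toReal_natCast, h] at this
  exact this.symm

lemma aux_qdiff {p t s : ℝ} (hp : 0 < p) (ht : 0 ≤ t) (hts : t ≤ s) :
    |(1 - Real.exp (-(2 * p * s))) / 2 - (1 - Real.exp (-(2 * p * t))) / 2| ≤ p * (s - t) := by
  have h1 : Real.exp (-(2 * p * t)) ≤ 1 := by
    apply Real.exp_le_one_iff.mpr; nlinarith
  have h2 : Real.exp (-(2 * p * s)) ≤ Real.exp (-(2 * p * t)) := by
    apply Real.exp_le_exp.mpr; nlinarith
  have h3 : Real.exp (-(2 * p * s)) = Real.exp (-(2 * p * t)) * Real.exp (-(2 * p * (s - t))) := by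
    rw [← Real.exp_add]; ring_nf
  have h4 : 1 - 2 * p * (s - t) ≤ Real.exp (-(2 * p * (s - t))) := by
    have := Real.add_one_le_exp (-(2 * p * (s - t))); linarith
  have h5 : Real.exp (-(2 * p * t)) - Real.exp (-(2 * p * s)) ≤ 2 * p * (s - t) := by
    rw [h3]
    have hpos := Real.exp_pos (-(2 * p * t))
    nlinarith
  rw [abs_le]; constructor <;> nlinarith

/-- Let `N` be a rate-one Poisson process, `N k` its thinned processes with rates `p k`
(`∑ₖ p k = 1`), `ε ∈ {-1,1}^ℕ` fixed, and
`Ũ₁ᵉ t = ∑ₖ εₖ (𝟙{N k t odd} - q̃ₖ t)` with `q̃ₖ t = (1 - e^{-2 pₖ t})/2`.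
Then for all `t ≤ s ≤ t + δ`, almost surely (here: pathwise, under the pathwise
hypotheses) `|Ũ₁ᵉ s - Ũ₁ᵉ t| ≤ N(t+δ) - N(t) + δ`. -/
theorem poissonized_odd_occupancy_increment_bound
    {Ω : Type*} [MeasureSpace Ω] [IsProbabilityMeasure (ℙ : Measure Ω)]
    (p : ℕ → ℝ) (hp0 : ∀ k, 0 < p k) (hsum : ∑' k, p k = 1)
    (Ntot : ℝ → Ω → ℕ) (N : ℕ → ℝ → Ω → ℕ)
    (hmeas : ∀ k t, Measurable (N k t))
    (hzero : ∀ k ω, N k 0 ω = 0)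
    (hmono : ∀ k ω, Monotone (fun t => N k t ω))
    (hmonoTot : ∀ ω, Monotone (fun t => Ntot t ω))
    -- the `N k` are thinnings of the total process `Ntot`
    (hthin : ∀ t ω, (∑' k, (N k t ω : ENNReal)) = (Ntot t ω : ENNReal))
    -- `Ntot` has stationary Poisson(1) increments
    (hincTot : ∀ s t : ℝ, 0 ≤ s → s ≤ t → ∀ j : ℕ,
      ℙ {ω | Ntot t ω - Ntot s ω = j}
        = ENNReal.ofReal (Real.exp (-(t - s)) * (t - s) ^ j / j.factorial))
    -- the `N k` have stationary Poisson(p k) increments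
    (hinc : ∀ k, ∀ s t : ℝ, 0 ≤ s → s ≤ t → ∀ j : ℕ,
      ℙ {ω | N k t ω - N k s ω = j}
        = ENNReal.ofReal (Real.exp (-(p k * (t - s))) * (p k * (t - s)) ^ j / j.factorial))
    (ε : ℕ → ℝ) (hε : ∀ k, ε k = 1 ∨ ε k = -1)
    (U1 : ℝ → Ω → ℝ)
    (hU1 : ∀ t ω, U1 t ω
      = ∑' k, ε k * ((if Odd (N k t ω) then (1 : ℝ) else 0)
          - (1 - Real.exp (-(2 * p k * t))) / 2))
    (t s δ : ℝ) (ht : 0 ≤ t) (hts : t ≤ s) (hsδ : s ≤ t + δ) :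
    ∀ ω, |U1 s ω - U1 t ω| ≤ ((Ntot (t + δ) ω : ℝ) - (Ntot t ω : ℝ)) + δ := by
  intro ω
  have hs0 : 0 ≤ s := le_trans ht hts
  have hδ0 : 0 ≤ δ := by linarith
  have hpsum : Summable p := by
    by_contra h
    rw [tsum_eq_zero_of_not_summable h] at hsum
    norm_num at hsum
  -- summable nat sums at a fixed time
  have haux : ∀ u : ℝ, Summable (fun k => (N k u ω : ℝ)) ∧
      ∑' k, (N k u ω : ℝ) = Ntot u ω := fun u => aux_sum_nat (hthin u ω)
  -- f and g
  set f : ℕ → ℝ := fun k => ε k * ((if Odd (N k s ω) then (1 : ℝ) else 0)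
      - (1 - Real.exp (-(2 * p k * s))) / 2) with hf
  set g : ℕ → ℝ := fun k => ε k * ((if Odd (N k t ω) then (1 : ℝ) else 0)
      - (1 - Real.exp (-(2 * p k * t))) / 2) with hg
  have hεabs : ∀ k, |ε k| = 1 := by
    intro k; rcases hε k with h | h <;> simp [h]
  have hqnn : ∀ k (u : ℝ), 0 ≤ u → 0 ≤ (1 - Real.exp (-(2 * p k * u))) / 2 ∧
      (1 - Real.exp (-(2 * p k * u))) / 2 ≤ p k * u := by
    intro k u hu
    have h1 : Real.exp (-(2 * p k * u)) ≤ 1 := by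
      apply Real.exp_le_one_iff.mpr; nlinarith [(hp0 k)]
    have h2 : 1 - 2 * p k * u ≤ Real.exp (-(2 * p k * u)) := by
      have := Real.add_one_le_exp (-(2 * p k * u)); linarith
    constructor <;> linarith
  have hindnn : ∀ (n : ℕ), (0:ℝ) ≤ (if Odd n then (1:ℝ) else 0) ∧
      (if Odd n then (1:ℝ) else 0) ≤ (n : ℝ) := by
    intro n
    constructor
    · positivity
    · by_cases h : Odd n
      · have hn : 1 ≤ n := Nat.one_le_iff_ne_zero.mpr (by rintro rfl; simp at h)
        simpa [h] using (Nat.one_le_cast (α := ℝ)).mpr hn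
      · simp [h]
  -- summability of f and g
  have hsummF : ∀ (u : ℝ), 0 ≤ u → Summable (fun k => ε k *
      ((if Odd (N k u ω) then (1 : ℝ) else 0) - (1 - Real.exp (-(2 * p k * u))) / 2)) := by
    intro u hu
    apply Summable.of_abs
    refine Summable.of_nonneg_of_le (fun k => abs_nonneg _) ?_
      ((haux u).1.add (hpsum.mul_right u))
    intro k
    rw [abs_mul, hεabs k, one_mul]
    have h1 := hindnn (N k u ω)
    have h2 := hqnn k u hu
    rw [abs_sub_comm, abs_le]
    constructor <;> nlinarith
  have hFs := hsummF s hs0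
  have hGs := hsummF t ht
  -- difference
  have hUdiff : U1 s ω - U1 t ω = ∑' k, (f k - g k) := by
    rw [hU1 s ω, hU1 t ω, Summable.tsum_sub hFs hGs]
  -- bound function
  set h1 : ℕ → ℝ := fun k => if N k s ω = N k t ω then 0 else 1 with hh1
  set h2 : ℕ → ℝ := fun k => p k * (s - t) with hh2
  have hbound : ∀ k, |f k - g k| ≤ h1 k + h2 k := by
    intro k
    have : f k - g k = ε k * (((if Odd (N k s ω) then (1 : ℝ) else 0)
        - (if Odd (N k t ω) then (1 : ℝ) else 0))
        - ((1 - Real.exp (-(2 * p k * s))) / 2 - (1 - Real.exp (-(2 * p k * t))) / 2)) := by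
      simp only [hf, hg]; ring
    rw [this, abs_mul, hεabs k, one_mul]
    have hq := aux_qdiff (hp0 k) ht hts
    have hind : |(if Odd (N k s ω) then (1 : ℝ) else 0)
        - (if Odd (N k t ω) then (1 : ℝ) else 0)| ≤ h1 k := by
      simp only [hh1]
      by_cases h : N k s ω = N k t ω
      · simp [h]
      · simp only [h, if_false]
        by_cases ha : Odd (N k s ω) <;> by_cases hb : Odd (N k t ω) <;> simp [ha, hb]
    calc _ ≤ |(if Odd (N k s ω) then (1 : ℝ) else 0)
        - (if Odd (N k t ω) then (1 : ℝ) else 0)|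
        + |(1 - Real.exp (-(2 * p k * s))) / 2 - (1 - Real.exp (-(2 * p k * t))) / 2| :=
          abs_sub _ _
      _ ≤ h1 k + h2 k := by simp only [hh2]; exact add_le_add hind hq
  -- bound on ∑ h1
  have hdiffsumm : Summable (fun k => (N k s ω : ℝ) - (N k t ω : ℝ)) :=
    (haux s).1.sub (haux t).1
  have hdle : ∀ k, h1 k ≤ (N k s ω : ℝ) - (N k t ω : ℝ) := by
    intro k
    have hm := hmono k ω hts
    simp only [hh1]
    by_cases h : N k s ω = N k t ω
    · simp [h]
    · have : N k t ω < N k s ω := lt_of_le_of_ne hm (Ne.symm h)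
      have : N k t ω + 1 ≤ N k s ω := this
      simp only [h, if_false]
      have := (Nat.cast_le (α := ℝ)).mpr this
      push_cast at this ⊢; linarith
  have hh1nn : ∀ k, 0 ≤ h1 k := by
    intro k; simp only [hh1]; positivity
  have hh1summ : Summable h1 :=
    Summable.of_nonneg_of_le hh1nn hdle hdiffsumm
  have hh1sum : ∑' k, h1 k ≤ (Ntot s ω : ℝ) - (Ntot t ω : ℝ) := by
    have := Summable.tsum_le_tsum hdle hh1summ hdiffsumm
    rwa [Summable.tsum_sub (haux s).1 (haux t).1, (haux s).2, (haux t).2] at this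
  have hh2summ : Summable h2 := hpsum.mul_right _
  have hh2sum : ∑' k, h2 k = s - t := by
    simp only [hh2]
    rw [tsum_mul_right, hsum, one_mul]
  -- final chain
  have hDabs : Summable (fun k => |f k - g k|) :=
    Summable.of_nonneg_of_le (fun k => abs_nonneg _) hbound (hh1summ.add hh2summ)
  calc |U1 s ω - U1 t ω| = |∑' k, (f k - g k)| := by rw [hUdiff]
    _ ≤ ∑' k, |f k - g k| := by
        have := norm_tsum_le_tsum_norm (f := fun k => f k - g k) (by simpa [Real.norm_eq_abs] using hDabs)
        simpa [Real.norm_eq_abs] using this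
    _ ≤ ∑' k, (h1 k + h2 k) := Summable.tsum_le_tsum hbound hDabs (hh1summ.add hh2summ)
    _ = (∑' k, h1 k) + ∑' k, h2 k := Summable.tsum_add hh1summ hh2summ
    _ ≤ ((Ntot s ω : ℝ) - (Ntot t ω : ℝ)) + (s - t) := by
        rw [hh2sum]; exact add_le_add hh1sum le_rfl
    _ ≤ ((Ntot (t + δ) ω : ℝ) - (Ntot t ω : ℝ)) + δ := by
        have := (Nat.cast_le (α := ℝ)).mpr (hmonoTot ω hsδ)
        linarith
end
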